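/- arXiv:2103.11171 — 7 statements merged into one kernel-verified Lean document; each statement's English description precedes it below -/
import Mathlib

section
/- Let Q = T[H_1, …, H_t] be a strong semicomplete composition such that T does not belong to 𝒯₁. Then every minimal separator S of Q induces in the complement of the underlying graph of Q a subgraph which is the union of some connected components of that complement; moreover, each vertex s ∈ S is adjacent (in the underlying graph of Q) to every vertex of Q − S. -/
universe u v

/-- There is a directed walk of length at most `n` from `x` to `y`. -/
def ReachIn {V : Type u} (A : V → V → Prop) : ℕ → V → V → Prop
  | 0 => fun x y => x = y
  | n + 1 => fun x y => x = y ∨ ∃ z, A x z ∧ ReachIn A n z y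

/-- A digraph is strong if every vertex can reach every other vertex. -/
def IsStrong {V : Type u} (A : V → V → Prop) : Prop :=
  ∀ x y : V, Relation.ReflTransGen A x y

/-- A digraph is loopless if it has no loops. -/
def Loopless {V : Type u} (A : V → V → Prop) : Prop := ∀ x, ¬ A x x

/-- A digraph is semicomplete if there is at least one arc between any two distinct vertices. -/
def Semicomplete {V : Type u} (A : V → V → Prop) : Prop :=
  ∀ x y : V, x ≠ y → A x y ∨ A y x

/-- The subdigraph induced on a set `s` of vertices. -/
def Restrict {V : Type u} (A : V → V → Prop) (s : Set V) :
    {v // v ∈ s} → {v // v ∈ s} → Prop := fun x y => A x.1 y.1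

/-- `S` is a separator: deleting `S` leaves a non-strong digraph. -/
def IsSeparator {V : Type u} (A : V → V → Prop) (S : Set V) : Prop :=
  ¬ IsStrong (Restrict A Sᶜ)

/-- A digraph is `k`-strong-connected if every separator has at least `k` vertices. -/
def KStrong {V : Type u} (A : V → V → Prop) (k : ℕ) : Prop :=
  ∀ S : Set V, IsSeparator A S → k ≤ S.ncard

/-- The composition `T[H₁, …, H_t]`. -/
def Comp {t : ℕ} (T : Fin t → Fin t → Prop) (V : Fin t → Type u)
    (H : ∀ i, V i → V i → Prop) : (Σ i, V i) → (Σ i, V i) → Prop :=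
  fun p q => T p.1 q.1 ∨ ∃ h : p.1 = q.1, H q.1 (h ▸ p.2) q.2

/-- The complement of the underlying (simple) graph of a digraph. -/
def complUnderlying {V : Type u} (A : V → V → Prop) : SimpleGraph V where
  Adj x y := x ≠ y ∧ ¬ A x y ∧ ¬ A y x
  symm := ⟨fun x y ⟨h1, h2, h3⟩ => ⟨h1.symm, h3, h2⟩⟩
  loopless := ⟨fun x h => h.1 rfl⟩

/-- `x` is a `k`-king: it reaches every vertex by a path of length at most `k`. -/
def IsKKing {V : Type u} (A : V → V → Prop) (k : ℕ) (x : V) : Prop :=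
  ∀ y, ReachIn A k x y

/-- A (directed) path given as a list of vertices. -/
def IsPathList {V : Type u} (A : V → V → Prop) (l : List V) : Prop :=
  l.Nodup ∧ l.Chain' A

/-- A (directed) cycle given as a list of distinct vertices. -/
def IsCycleList {V : Type u} (A : V → V → Prop) (l : List V) : Prop :=
  2 ≤ l.length ∧ l.Nodup ∧ l.Chain' A ∧
    ∀ x ∈ l.getLast?, ∀ y ∈ l.head?, A x y
/-!
Each fibre `{p | p.1 = i}` of a composition is a module: its vertices have the same in- and
out-neighbours outside it. Let `S` be a minimal separator of a digraph `D` and `M` a module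
meeting both `S` (in `s`) and `D - S` (in `v`). Say `v` does not reach some vertex of `D - S`
and let `R` be the set of vertices it does reach. A walk in the strong digraph
`D - (S \ {s})` from `v` to a vertex outside `R` must leave `R` through `s`, so `s` has an
out-neighbour `b ∉ R`, and `b ∈ M` since `v` and `s` are twins seen from outside `M`. Then
`R ⊆ M`, as an arc from `R \ M` into `M` would also go to `b`; and `D - S ⊆ M`, as an arc
leaving `M` would also start at `v` and so end in `R`. If instead some vertex does not reach
`v`, the same argument runs in the reverse digraph.

So if a fibre `i` met both `S` and `D - S`, it would contain `D - S`. By minimality every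
`w ∈ S` has an in- and an out-neighbour in `D - S`; for `w` in a fibre `j ≠ i` this gives
`T i j` and `T j i`, i.e. `T ∈ 𝒯₁`. Hence each vertex of `S` lies in another fibre than each
vertex of `D - S` and is adjacent to it because `T` is semicomplete.
-/

open Relation Function

def IsModule {V : Type u} (A : V → V → Prop) (M : Set V) : Prop :=
  ∀ ⦃w w' q⦄, w ∈ M → w' ∈ M → q ∉ M → (A w q → A w' q) ∧ (A q w → A q w')

section Digraph

variable {V : Type u} {A : V → V → Prop} {S : Set V}

theorem IsModule.swap {M : Set V} (hM : IsModule A M) : IsModule (swap A) M :=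
  fun _ _ _ hw hw' hq => (hM hw hw' hq).symm

theorem isStrong_swap_iff : IsStrong (swap A) ↔ IsStrong A :=
  ⟨fun h x y => reflTransGen_swap.mp (h y x), fun h x y => reflTransGen_swap.mpr (h y x)⟩

theorem isSeparator_swap_iff : IsSeparator (swap A) S ↔ IsSeparator A S :=
  not_congr (isStrong_swap_iff (A := Restrict A Sᶜ))

theorem isStrong_of_minimal_separator (hmin : ∀ S' : Set V, S' ⊂ S → ¬ IsSeparator A S')
    {s : V} (hs : s ∈ S) : IsStrong (Restrict A (S \ {s})ᶜ) :=
  not_not.mp (hmin _ (Set.sdiff_singleton_ssubset.mpr hs))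

theorem IsStrong.subset_of_arc_closed {P C : Set V} (hP : IsStrong (Restrict A P))
    (hC : ∀ w q, w ∈ P → q ∈ P → w ∈ C → A w q → q ∈ C) {p : V} (hp : p ∈ P) (hpC : p ∈ C) :
    P ⊆ C := by
  have hclosed {a b : {v // v ∈ P}} (h : ReflTransGen (Restrict A P) a b) (ha : a.1 ∈ C) :
      b.1 ∈ C := by
    induction h with
    | refl => exact ha
    | @tail b c _ hbc ih => exact hC b.1 c.1 b.2 c.2 ih hbc
  exact fun q hq => hclosed (hP ⟨p, hp⟩ ⟨q, hq⟩) hpC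

theorem IsSeparator.nonempty_compl (hsep : IsSeparator A S) : Sᶜ.Nonempty := by
  by_contra h
  exact hsep fun x => absurd ⟨x.1, x.2⟩ h

theorem IsSeparator.exists_not_reach_or_not_reached (hsep : IsSeparator A S) {v : V}
    (hv : v ∈ Sᶜ) :
    (∃ y, ∃ hy : y ∈ Sᶜ, ¬ ReflTransGen (Restrict A Sᶜ) ⟨v, hv⟩ ⟨y, hy⟩) ∨
      ∃ x, ∃ hx : x ∈ Sᶜ, ¬ ReflTransGen (Restrict A Sᶜ) ⟨x, hx⟩ ⟨v, hv⟩ := by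
  by_contra! h
  exact hsep fun x y => (h.2 x x.2).trans (h.1 y y.2)

theorem IsSeparator.exists_out_neighbor (hsep : IsSeparator A S) {w : V} (hw : w ∈ S)
    (hstr : IsStrong (Restrict A (S \ {w})ᶜ)) : ∃ q ∈ Sᶜ, A w q := by
  obtain ⟨x, hx⟩ := hsep.nonempty_compl
  by_contra! hno
  have hsub : (S \ {w})ᶜ ⊆ {w} := hstr.subset_of_arc_closed (C := {w})
    (fun a q _ hq ha haq => by_contra fun hqw => hno q (fun hqS => hq ⟨hqS, hqw⟩) (ha ▸ haq))
    (fun h => h.2 rfl) rfl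
  exact hx (hsub (fun h => hx h.1) ▸ hw)

theorem IsSeparator.exists_in_neighbor (hsep : IsSeparator A S) {w : V} (hw : w ∈ S)
    (hstr : IsStrong (Restrict A (S \ {w})ᶜ)) : ∃ q ∈ Sᶜ, A q w :=
  (isSeparator_swap_iff.mpr hsep).exists_out_neighbor hw (isStrong_swap_iff.mpr hstr)

theorem compl_subset_of_isModule_of_not_reach {M : Set V} (hM : IsModule A M) {s v y : V}
    (hs : s ∈ S) (hsM : s ∈ M) (hv : v ∈ Sᶜ) (hvM : v ∈ M) (hy : y ∈ Sᶜ)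
    (hvy : ¬ ReflTransGen (Restrict A Sᶜ) ⟨v, hv⟩ ⟨y, hy⟩)
    (hstr : IsStrong (Restrict A (S \ {s})ᶜ)) : Sᶜ ⊆ M := by
  let R : Set V := {z | ∃ hz : z ∈ Sᶜ, ReflTransGen (Restrict A Sᶜ) ⟨v, hv⟩ ⟨z, hz⟩}
  have hvR : v ∈ R := ⟨hv, .refl⟩
  have hR {w q : V} (hw : w ∈ R) (hq : q ∈ Sᶜ) (hwq : A w q) : q ∈ R :=
    ⟨hq, hw.2.tail (show Restrict A Sᶜ ⟨w, hw.1⟩ ⟨q, hq⟩ from hwq)⟩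
  have hRS : R ⊆ (S \ {s})ᶜ := fun z hz h => hz.1 h.1
  have hcompl {q : V} (hq : q ∈ (S \ {s})ᶜ) (hqs : q ≠ s) : q ∈ Sᶜ := fun h => hq ⟨h, hqs⟩
  obtain ⟨b, hb, hbR, hsb⟩ : ∃ b ∈ Sᶜ, b ∉ R ∧ A s b := by
    by_contra! hno
    have hsub := hstr.subset_of_arc_closed (C := insert s R) (fun w q _ hq hw hwq => by
      by_cases hqs : q = s
      · exact Or.inl hqs
      refine Or.inr ?_
      rcases hw with rfl | hw
      · exact by_contra fun hqR => hno q (hcompl hq hqs) hqR hwq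
      · exact hR hw (hcompl hq hqs) hwq) (hRS hvR) (Or.inr hvR)
    rcases hsub (fun h => hy h.1) with rfl | hyR
    · exact hy hs
    · exact hvy hyR.2
  have hbM : b ∈ M := by_contra fun hbM => hbR (hR hvR hb ((hM hsM hvM hbM).1 hsb))
  have hRM : R ⊆ M := by
    intro z hzR
    by_contra hzM
    have hsub := hstr.subset_of_arc_closed (C := R \ M) (fun w q _ hq hw hwq => by
      have hqM : q ∉ M := fun hqM => hbR (hR hw.1 hb ((hM hqM hbM hw.2).2 hwq))
      exact ⟨hR hw.1 (hcompl hq fun h => hqM (h ▸ hsM)) hwq, hqM⟩) (hRS hzR) ⟨hzR, hzM⟩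
    exact hbR (hsub (fun h => hb h.1)).1
  refine fun z hz => hstr.subset_of_arc_closed (C := M) (fun w q _ hq hw hwq => ?_)
    (hRS hvR) hvM (fun h => hz h.1)
  by_contra hqM
  exact hqM (hRM (hR hvR (hcompl hq fun h => hqM (h ▸ hsM)) ((hM hw hvM hqM).1 hwq)))

theorem IsSeparator.compl_subset_of_isModule (hsep : IsSeparator A S) {M : Set V}
    (hM : IsModule A M) {s v : V} (hs : s ∈ S) (hsM : s ∈ M) (hv : v ∈ Sᶜ) (hvM : v ∈ M)
    (hstr : IsStrong (Restrict A (S \ {s})ᶜ)) : Sᶜ ⊆ M := by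
  rcases hsep.exists_not_reach_or_not_reached hv with ⟨y, hy, hvy⟩ | ⟨x, hx, hxv⟩
  · exact compl_subset_of_isModule_of_not_reach hM hs hsM hv hvM hy hvy hstr
  · exact compl_subset_of_isModule_of_not_reach hM.swap hs hsM hv hvM hx
      (fun h => hxv (reflTransGen_swap.mp h)) (isStrong_swap_iff.mpr hstr)

theorem mem_of_reachable_complUnderlying (hadj : ∀ s ∈ S, ∀ v ∉ S, A s v ∨ A v s)
    {s y : V} (hs : s ∈ S) (h : (complUnderlying A).Reachable s y) : y ∈ S := by
  rw [SimpleGraph.reachable_iff_reflTransGen] at h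
  induction h with
  | refl => exact hs
  | @tail b c _ hbc ih => exact by_contra fun hc => (hadj b ih c hc).elim hbc.2.1 hbc.2.2

end Digraph

section Composition

variable {t : ℕ} {T : Fin t → Fin t → Prop} {V : Fin t → Type u} {H : ∀ i, V i → V i → Prop}

theorem comp_iff_of_fst_ne {p q : Σ i, V i} (hpq : p.1 ≠ q.1) : Comp T V H p q ↔ T p.1 q.1 :=
  or_iff_left fun ⟨h, _⟩ => hpq h

theorem isModule_comp_fiber (i : Fin t) : IsModule (Comp T V H) {p | p.1 = i} := by
  intro w w' q hw hw' hq
  simp only [Set.mem_setOf_eq] at hw hw' hq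
  simp only [comp_iff_of_fst_ne (hw ▸ Ne.symm hq), comp_iff_of_fst_ne (hw' ▸ Ne.symm hq),
    comp_iff_of_fst_ne (hw ▸ hq), comp_iff_of_fst_ne (hw' ▸ hq), hw, hw']
  exact ⟨id, id⟩

theorem fst_ne_of_minimal_separator [∀ i, Nonempty (V i)]
    (hT1 : ¬ ∃ u : Fin t, ∀ v, v ≠ u → T u v ∧ T v u) {S : Set (Σ i, V i)}
    (hsep : IsSeparator (Comp T V H) S)
    (hmin : ∀ S' : Set (Σ i, V i), S' ⊂ S → ¬ IsSeparator (Comp T V H) S')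
    {s v : Σ i, V i} (hs : s ∈ S) (hv : v ∉ S) : v.1 ≠ s.1 := by
  intro hvs
  have hfiber : Sᶜ ⊆ {p | p.1 = s.1} := hsep.compl_subset_of_isModule (isModule_comp_fiber s.1)
    hs rfl hv hvs (isStrong_of_minimal_separator hmin hs)
  refine hT1 ⟨s.1, fun j hj => ?_⟩
  let w : Σ i, V i := ⟨j, Classical.arbitrary _⟩
  have hw : w ∈ S := by_contra fun h => hj (hfiber h)
  have hstr := isStrong_of_minimal_separator hmin hw
  obtain ⟨q, hq, hwq⟩ := hsep.exists_out_neighbor hw hstr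
  obtain ⟨q', hq', hq'w⟩ := hsep.exists_in_neighbor hw hstr
  have hqs : q.1 = s.1 := hfiber hq
  have hq's : q'.1 = s.1 := hfiber hq'
  rw [comp_iff_of_fst_ne (hqs ▸ hj)] at hwq
  rw [comp_iff_of_fst_ne (hq's ▸ Ne.symm hj)] at hq'w
  exact ⟨hq's ▸ hq'w, hqs ▸ hwq⟩

end Composition

theorem stmt0_general {t : ℕ} (V : Fin t → Type u)
    [∀ i, Nonempty (V i)] (T : Fin t → Fin t → Prop) (H : ∀ i, V i → V i → Prop)
    (hsc : Semicomplete T)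
    (hT1 : ¬ ∃ u : Fin t, ∀ v, v ≠ u → T u v ∧ T v u)
    (S : Set (Σ i, V i)) (hsep : IsSeparator (Comp T V H) S)
    (hmin : ∀ S' : Set (Σ i, V i), S' ⊂ S → ¬ IsSeparator (Comp T V H) S') :
    (∀ s ∈ S, ∀ y, (complUnderlying (Comp T V H)).Reachable s y → y ∈ S) ∧
      (∀ s ∈ S, ∀ v, v ∉ S → v ≠ s → Comp T V H s v ∨ Comp T V H v s) := by
  have hadj : ∀ s ∈ S, ∀ v ∉ S, Comp T V H s v ∨ Comp T V H v s := fun s hs v hv => by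
    have hvs := fst_ne_of_minimal_separator hT1 hsep hmin hs hv
    exact (hsc s.1 v.1 hvs.symm).imp (comp_iff_of_fst_ne hvs.symm).mpr
      (comp_iff_of_fst_ne hvs).mpr
  exact ⟨fun s hs y => mem_of_reachable_complUnderlying hadj hs,
    fun s hs v hv _ => hadj s hs v hv⟩

/-- In a strong semicomplete composition `Q = T[H₁,…,H_t]` with `T ∉ 𝒯₁`,
every minimal separator `S` induces in the complement of the underlying graph of `Q`
a union of connected components of that complement, and every vertex of `S` is adjacent
(in the underlying graph) to every vertex outside `S`. -/
theorem stmt0 {t : ℕ} (ht : 2 ≤ t) (V : Fin t → Type u) [∀ i, Fintype (V i)]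
    [∀ i, Nonempty (V i)] (T : Fin t → Fin t → Prop) (H : ∀ i, V i → V i → Prop)
    (hTl : Loopless T) (hHl : ∀ i, Loopless (H i)) (hsc : Semicomplete T)
    (hstrong : IsStrong (Comp T V H))
    (hT1 : ¬ ∃ u : Fin t, ∀ v, v ≠ u → T u v ∧ T v u)
    (S : Set (Σ i, V i)) (hsep : IsSeparator (Comp T V H) S)
    (hmin : ∀ S' : Set (Σ i, V i), S' ⊂ S → ¬ IsSeparator (Comp T V H) S') :
    (∀ s ∈ S, ∀ y, (complUnderlying (Comp T V H)).Reachable s y → y ∈ S) ∧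
      (∀ s ∈ S, ∀ v, v ∉ S → v ≠ s → Comp T V H s v ∨ Comp T V H v s) :=
  stmt0_general V T H hsc hT1 S hsep hmin
end

section
/- Let Q = T[H_1, …, H_t] be a k-strong-connected semicomplete composition with T not in 𝒯₁. If V(H_i) induces a connected component of the complement of the underlying graph of Q for some i ∈ [t], then the digraph obtained from Q by deleting all arcs of H_i is again a k-strong-connected semicomplete composition. -/
universe u v

/-!
Let `S` separate `Q'`, the composition with the arcs of `H i` deleted, and suppose `S` does not
separate `Q`. If `Q - S` keeps a vertex `b` outside part `i`, then `Q' - S` is strong as well: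
in `Q'` the vertices of part `i` are twins (same out- and in-neighbours), so a walk of `Q - S`
to or from `b` can skip the arcs it uses inside part `i`. Hence the nonempty `Q - S` lies inside part `i`.
As `T ∉ 𝒯₁`, some part `j ≠ i` is joined to `i` in one direction only, and removing part `j`
from `S` gives a separator of `Q` with at most `|S|` vertices.
-/

open Relation

section Twins

variable {W : Type*} {A A' : W → W → Prop} {C : W → Prop}

theorem reflTransGen_of_extra_arcs_among_twins
    (hA : ∀ x w, A x w → A' x w ∨ (C x ∧ C w))
    (htwin : ∀ x x' z, C x → C x' → A' x' z → A' x z)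
    {x y : W} (hy : ¬ C y) (h : ReflTransGen A x y) : ReflTransGen A' x y := by
  induction h using ReflTransGen.head_induction_on with
  | refl => rfl
  | head hxw _ ih =>
    rcases hA _ _ hxw with hxw' | ⟨hx, hw⟩
    · exact .head hxw' ih
    · rcases ih.cases_head with rfl | ⟨z, hwz, hzy⟩
      · exact absurd hw hy
      · exact .head (htwin _ _ _ hx hw hwz) hzy

theorem not_isStrong_of_forall_imp (hP : ∀ x y, A x y → C x → C y) {x y : W}
    (hx : C x) (hy : ¬ C y) : ¬ IsStrong A := by
  intro hA
  have hreach : ∀ z, ReflTransGen A x z → C z := fun z h => by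
    induction h with
    | refl => exact hx
    | tail _ hab ih => exact hP _ _ hab ih
  exact hy (hreach y (hA x y))

end Twins

namespace Comp

variable {t : ℕ} {T : Fin t → Fin t → Prop} {V : Fin t → Type u} {H : ∀ i, V i → V i → Prop}

theorem of_source_fst_eq {j : Fin t} (hH : ∀ a b, ¬ H j a b) {x x' z : Σ i, V i}
    (hx : x.1 = j) (hx' : x'.1 = j) (h : Comp T V H x' z) : Comp T V H x z := by
  obtain ⟨a, a'⟩ := x'
  obtain ⟨c, c'⟩ := z
  rcases h with hT | ⟨hac, hH'⟩
  · exact .inl (by rwa [hx, ← hx'])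
  · dsimp only at hac hx'
    subst hac hx'
    exact absurd hH' (hH _ _)

theorem of_target_fst_eq {j : Fin t} (hH : ∀ a b, ¬ H j a b) {x x' z : Σ i, V i}
    (hx : x.1 = j) (hx' : x'.1 = j) (h : Comp T V H z x') : Comp T V H z x := by
  obtain ⟨a, a'⟩ := x'
  obtain ⟨c, c'⟩ := z
  rcases h with hT | ⟨hac, hH'⟩
  · exact .inl (by rwa [hx, ← hx'])
  · dsimp only at hac hx'
    subst hac hx'
    exact absurd hH' (hH _ _)

theorem update_false_or {i : Fin t} {x w : Σ i, V i} (h : Comp T V H x w) :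
    Comp T V (Function.update H i fun _ _ => False) x w ∨ (x.1 = i ∧ w.1 = i) := by
  rcases h with hT | ⟨hxw, hH'⟩
  · exact .inl (.inl hT)
  by_cases hw : w.1 = i
  · exact .inr ⟨hxw.trans hw, hw⟩
  · exact .inl (.inr ⟨hxw, by rwa [Function.update_of_ne hw]⟩)

theorem isStrong_restrict_update_false {i : Fin t} {s : Set (Σ i, V i)}
    (hQ : IsStrong (Restrict (Comp T V H) s)) (b : s) (hb : b.1.1 ≠ i) :
    IsStrong (Restrict (Comp T V (Function.update H i fun _ _ => False)) s) := by
  have hH : ∀ a c, ¬ Function.update H i (fun _ _ => False) i a c := by simp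
  set Q' := Comp T V (Function.update H i fun _ _ => False)
  intro x y
  have hxb : ReflTransGen (Restrict Q' s) x b :=
    reflTransGen_of_extra_arcs_among_twins (A := Restrict (Comp T V H) s)
      (C := fun p => p.1.1 = i) (fun _ _ h => update_false_or h)
      (fun _ _ _ hx hx' h => of_source_fst_eq hH hx hx' h) hb (hQ x b)
  have hby : ReflTransGen (Restrict Q' s) b y :=
    reflTransGen_swap.mp <| reflTransGen_of_extra_arcs_among_twins
      (A := Function.swap (Restrict (Comp T V H) s)) (A' := Function.swap (Restrict Q' s))
      (C := fun p => p.1.1 = i) (fun _ _ h => (update_false_or h).imp id And.symm)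
      (fun _ _ _ hx hx' h => of_target_fst_eq hH hx hx' h) hb (reflTransGen_swap.mpr (hQ b y))
  exact hxb.trans hby

/-- With no arc of `T` from `a` to `b`, part `a` cannot be left. -/
theorem not_isStrong_restrict_of_subset_two_parts {a b : Fin t} (hab : ¬ T a b) (hne : a ≠ b)
    {s : Set (Σ i, V i)} (hs : ∀ p ∈ s, p.1 = a ∨ p.1 = b) {x y : Σ i, V i}
    (hx : x ∈ s) (hy : y ∈ s) (hxa : x.1 = a) (hyb : y.1 = b) :
    ¬ IsStrong (Restrict (Comp T V H) s) := by
  refine not_isStrong_of_forall_imp (C := fun p : s => p.1.1 = a) ?_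
    (x := ⟨x, hx⟩) (y := ⟨y, hy⟩) hxa (by simp [hyb, hne.symm])
  rintro p q (hT | ⟨hpq, -⟩) (hp : p.1.1 = a)
  · rcases hs q q.2 with hq | hq
    · exact hq
    · rw [hp, hq] at hT
      exact absurd hT hab
  · exact hpq ▸ hp

theorem isSeparator_inter_fst_ne {i j : Fin t} [Nonempty (V j)] (hji : j ≠ i)
    (hT : ¬ (T i j ∧ T j i)) {S : Set (Σ i, V i)} (hpart : ∀ p ∈ Sᶜ, p.1 = i)
    {x : Σ i, V i} (hx : x ∈ Sᶜ) :
    IsSeparator (Comp T V H) (S ∩ {p | p.1 ≠ j}) := by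
  obtain ⟨w⟩ := ‹Nonempty (V j)›
  have hs : ∀ p ∈ (S ∩ {p | p.1 ≠ j})ᶜ, p.1 = i ∨ p.1 = j := fun p hp =>
    (em (p ∈ S)).elim (fun hpS => .inr (not_not.mp fun hpj => hp ⟨hpS, hpj⟩))
      (fun hpS => .inl (hpart p hpS))
  have hxs : x ∈ (S ∩ {p | p.1 ≠ j})ᶜ := fun h => hx h.1
  have hws : (⟨j, w⟩ : Σ i, V i) ∈ (S ∩ {p | p.1 ≠ j})ᶜ := fun h => h.2 rfl
  by_cases hij : T i j
  · exact not_isStrong_restrict_of_subset_two_parts (fun hji' => hT ⟨hij, hji'⟩) hji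
      (fun p hp => (hs p hp).symm) hws hxs rfl (hpart x hx)
  · exact not_isStrong_restrict_of_subset_two_parts hij hji.symm hs hxs hws (hpart x hx) rfl

end Comp

theorem stmt1_general {t : ℕ} (V : Fin t → Type u) [∀ i, Fintype (V i)]
    [∀ i, Nonempty (V i)] (T : Fin t → Fin t → Prop) (H : ∀ i, V i → V i → Prop)
    (k : ℕ) (hk : KStrong (Comp T V H) k)
    (hT1 : ¬ ∃ u : Fin t, ∀ v, v ≠ u → T u v ∧ T v u)
    (i : Fin t) :
    KStrong (Comp T V (Function.update H i (fun _ _ => False))) k := by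
  intro S hS
  by_cases hQS : IsSeparator (Comp T V H) S
  · exact hk S hQS
  have hQ : IsStrong (Restrict (Comp T V H) Sᶜ) := not_not.mp hQS
  have hpart : ∀ p ∈ Sᶜ, p.1 = i := by
    by_contra! ⟨b, hbS, hb⟩
    exact hS (Comp.isStrong_restrict_update_false hQ ⟨b, hbS⟩ hb)
  obtain ⟨x, hx⟩ : Sᶜ.Nonempty := by
    by_contra! hempty
    exact hS fun y => absurd y.2 (by simp [hempty])
  obtain ⟨j, hji, hTij⟩ : ∃ j, j ≠ i ∧ ¬ (T i j ∧ T j i) := by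
    by_contra! h
    exact hT1 ⟨i, h⟩
  calc k ≤ (S ∩ {p | p.1 ≠ j}).ncard := hk _ (Comp.isSeparator_inter_fst_ne hji hTij hpart hx)
    _ ≤ S.ncard := Set.ncard_le_ncard Set.inter_subset_left

/-- If `Q = T[H₁,…,H_t]` is a `k`-strong-connected semicomplete composition
with `T ∉ 𝒯₁` and `V(H_i)` induces a connected component of the complement of the
underlying graph of `Q`, then deleting all arcs of `H_i` yields a `k`-strong-connected
semicomplete composition. -/
theorem stmt1 {t : ℕ} (ht : 2 ≤ t) (V : Fin t → Type u) [∀ i, Fintype (V i)]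
    [∀ i, Nonempty (V i)] (T : Fin t → Fin t → Prop) (H : ∀ i, V i → V i → Prop)
    (hTl : Loopless T) (hHl : ∀ i, Loopless (H i)) (hsc : Semicomplete T)
    (k : ℕ) (hk : KStrong (Comp T V H) k)
    (hT1 : ¬ ∃ u : Fin t, ∀ v, v ≠ u → T u v ∧ T v u)
    (i : Fin t)
    (hconn : ∀ p q : Σ j, V j, p.1 = i → q.1 = i →
      (complUnderlying (Comp T V H)).Reachable p q)
    (hclosed : ∀ p q : Σ j, V j, p.1 = i →
      (complUnderlying (Comp T V H)).Reachable p q → q.1 = i) :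
    KStrong (Comp T V (Function.update H i (fun _ _ => False))) k :=
  stmt1_general V T H k hk hT1 i
end

section
/- Every strong semicomplete composition Q = T[H_1, …, H_t] with at least four vertices has two distinct vertices v_1 and v_2 such that Q − v_1 and Q − v_2 are both strong. -/
universe u v

/-! If some `H i` has two vertices `x ≠ y`, deleting either of them leaves every block nonempty,
and any arc `u_i u_p` of the strong digraph `T` then lifts to arcs between the surviving parts
of blocks `i` and `p`; so `Q - x` and `Q - y` are strong. Otherwise `Q` is a strong semicomplete
digraph. There, take a largest proper subset `Z ∋ p` inducing a strong subdigraph. A vertex `w`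
outside `Z` with arcs both to and from `Z` can be added to `Z`, so by maximality `Z` is all of
`Q - w`. If there is no such vertex, semicompleteness and strong connectivity give an arc `a → b`
outside `Z` with `Z ⇒ a` and `b ⇒ Z`; then `Z ∪ {a, b}` is strong, hence everything, and deleting
any vertex of `Z` other than `p` keeps the digraph strong. Either way there is a non-separating
vertex `≠ p`, and applying this twice gives two of them. -/

open Relation

theorem isStrong_of_root {Y : Type*} {R : Y → Y → Prop} (r : Y)
    (h : ∀ x, ReflTransGen R x r ∧ ReflTransGen R r x) : IsStrong R :=
  fun x y => (h x).1.trans (h y).2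

theorem IsStrong.transGen {Y : Type*} [Nontrivial Y] {R : Y → Y → Prop} (h : IsStrong R)
    (x y : Y) : TransGen R x y := by
  obtain ⟨z, hzx⟩ := exists_ne x
  have transGen_of_ne : ∀ a b, a ≠ b → TransGen R a b := fun a b hab =>
    (reflTransGen_iff_eq_or_transGen.1 (h a b)).resolve_left hab.symm
  by_cases hxy : x = y
  · subst hxy
    exact (transGen_of_ne x z hzx.symm).trans (transGen_of_ne z x hzx)
  · exact transGen_of_ne x y hxy

theorem Relation.ReflTransGen.exists_rel_mem_notMem {Y : Type*} {R : Y → Y → Prop} {S : Set Y}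
    {x y : Y} (h : ReflTransGen R x y) (hx : x ∈ S) (hy : y ∉ S) :
    ∃ u ∈ S, ∃ w ∉ S, R u w := by
  induction h with
  | refl => exact absurd hx hy
  | @tail b c _ hbc ih =>
    by_cases hb : b ∈ S
    · exact ⟨b, hb, c, hy, hbc⟩
    · exact ih hb

section InducedSubdigraph

variable {X : Type*} {A : X → X → Prop}

theorem reflTransGen_restrict_mono {s s' : Set X} (hss' : s ⊆ s') {x y : s}
    (h : ReflTransGen (Restrict A s) x y) :
    ReflTransGen (Restrict A s') (Set.inclusion hss' x) (Set.inclusion hss' y) :=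
  h.lift (Set.inclusion hss') fun _ _ => id

theorem IsStrong.restrict_insert {s : Set X} (hs : IsStrong (Restrict A s)) {w c c' : X}
    (hc : c ∈ s) (hc' : c' ∈ s) (hwc : A w c) (hc'w : A c' w) :
    IsStrong (Restrict A (insert w s)) := by
  have hsub : s ⊆ insert w s := Set.subset_insert w s
  have lift : ∀ x y : s, ReflTransGen (Restrict A (insert w s))
      (Set.inclusion hsub x) (Set.inclusion hsub y) :=
    fun x y => reflTransGen_restrict_mono hsub (hs x y)
  refine isStrong_of_root ⟨c, hsub hc⟩ ?_
  have hc'w' : Restrict A (insert w s) ⟨c', hsub hc'⟩ ⟨w, Set.mem_insert w s⟩ := hc'w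
  rintro ⟨x, rfl | hx⟩
  · exact ⟨.single hwc, (lift ⟨c, hc⟩ ⟨c', hc'⟩).tail hc'w'⟩
  · exact ⟨lift ⟨x, hx⟩ ⟨c, hc⟩, lift ⟨c, hc⟩ ⟨x, hx⟩⟩

theorem isStrong_restrict_of_hub_arc {s : Set X} {a b z : X} (ha : a ∈ s) (hb : b ∈ s)
    (hz : z ∈ s) (hab : A a b) (hza : A z a) (hbz : A b z)
    (hhub : ∀ x ∈ s, x ≠ a → x ≠ b → A x a ∧ A b x) : IsStrong (Restrict A s) := by
  have hab' : Restrict A s ⟨a, ha⟩ ⟨b, hb⟩ := hab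
  have hza' : Restrict A s ⟨z, hz⟩ ⟨a, ha⟩ := hza
  refine isStrong_of_root ⟨a, ha⟩ ?_
  rintro ⟨x, hx⟩
  by_cases hxa : x = a
  · subst hxa; exact ⟨.refl, .refl⟩
  by_cases hxb : x = b
  · subst hxb
    exact ⟨.head (show Restrict A s ⟨x, hx⟩ ⟨z, hz⟩ from hbz) (.single hza'), .single hab'⟩
  obtain ⟨hxa', hbx⟩ := hhub x hx hxa hxb
  exact ⟨.single hxa', .head hab' (.single hbx)⟩

end InducedSubdigraph

section Semicomplete

variable {X : Type*} {A : X → X → Prop}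

theorem Semicomplete.exists_hub_arc_notMem (hsc : Semicomplete A) (hst : IsStrong A)
    {Z : Set X} {p w₀ : X} (hp : p ∈ Z) (hw₀ : w₀ ∉ Z)
    (hno : ∀ w ∉ Z, ∀ c ∈ Z, A c w → ∀ c' ∈ Z, ¬ A w c') :
    ∃ a b, a ∉ Z ∧ b ∉ Z ∧ A a b ∧ (∀ x ∈ Z, A x a) ∧ (∀ x ∈ Z, A b x) := by
  obtain ⟨u, hu, a₀, ha₀, hua₀⟩ := (hst p w₀).exists_rel_mem_notMem hp hw₀
  obtain ⟨a, ⟨haZ, c, hc, hca⟩, b, hbIn, hab⟩ :=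
    (hst a₀ p).exists_rel_mem_notMem (S := {x | x ∉ Z ∧ ∃ c ∈ Z, A c x})
      ⟨ha₀, u, hu, hua₀⟩ (fun h => h.1 hp)
  have hbZ : b ∉ Z := fun hb => hno a haZ c hc hca b hb hab
  refine ⟨a, b, haZ, hbZ, hab, fun x hx => ?_, fun x hx => ?_⟩
  · exact (hsc x a (ne_of_mem_of_not_mem hx haZ)).resolve_right (hno a haZ c hc hca x hx)
  · exact (hsc b x (ne_of_mem_of_not_mem hx hbZ).symm).resolve_right
      fun hxb => hbIn ⟨hbZ, x, hx, hxb⟩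

variable [Fintype X]

theorem Semicomplete.exists_ne_isStrong_restrict_ne_of_maximal [DecidableEq X]
    (hsc : Semicomplete A) (hst : IsStrong A) (hcard : 4 ≤ Fintype.card X) {Z : Finset X} {p : X}
    (hpZ : p ∈ Z) (hZ : IsStrong (Restrict A ↑Z)) (hZne : Z ≠ Finset.univ)
    (hmax : ∀ W : Finset X, Z ⊂ W → IsStrong (Restrict A ↑W) → W = Finset.univ) :
    ∃ g ≠ p, IsStrong (Restrict A {w | w ≠ g}) := by
  obtain ⟨w₀, hw₀⟩ : ∃ w₀, w₀ ∉ Z := by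
    by_contra! h; exact hZne (Finset.eq_univ_iff_forall.2 h)
  by_cases htwo : ∃ w ∉ Z, ∃ c ∈ Z, A c w ∧ ∃ c' ∈ Z, A w c'
  · obtain ⟨w, hw, c, hc, hcw, c', hc', hwc'⟩ := htwo
    have hW := hmax (insert w Z) (Finset.ssubset_insert hw)
      (by rw [Finset.coe_insert]; exact hZ.restrict_insert hc' hc hwc' hcw)
    have hcompl : {x | x ≠ w} = (Z : Set X) := by
      ext x
      have hx : x ∈ insert w Z := hW ▸ Finset.mem_univ x
      rw [Finset.mem_insert] at hx
      exact ⟨hx.resolve_left, fun hxZ hxw => hw (hxw ▸ hxZ)⟩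
    exact ⟨w, fun h => hw (h ▸ hpZ), hcompl ▸ hZ⟩
  push Not at htwo
  obtain ⟨a, b, ha, hb, hab, hZa, hbZ⟩ := hsc.exists_hub_arc_notMem hst (Z := ↑Z) hpZ hw₀ htwo
  have hW := hmax (insert a (insert b Z))
    ((Finset.ssubset_insert hb).trans_subset (Finset.subset_insert _ _))
    (isStrong_restrict_of_hub_arc (by simp) (by simp) (by simp [hpZ]) hab (hZa p hpZ)
      (hbZ p hpZ) fun x hx hxa hxb => by
        simp only [Finset.coe_insert, Set.mem_insert_iff, hxa, hxb, false_or] at hx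
        exact ⟨hZa x hx, hbZ x hx⟩)
  have hZcard : 2 ≤ Z.card := by
    have hcard_le := Finset.card_insert_le a (insert b Z)
    rw [hW, Finset.card_univ] at hcard_le
    have := Finset.card_insert_le b Z
    omega
  obtain ⟨c, hcZ, hcp⟩ := Finset.exists_mem_ne (s := Z) (by omega) p
  obtain ⟨z, hzZ, hzc⟩ := Finset.exists_mem_ne (s := Z) (by omega) c
  refine ⟨c, hcp, isStrong_restrict_of_hub_arc (z := z) (by rintro rfl; exact ha hcZ)
    (by rintro rfl; exact hb hcZ) hzc hab (hZa z hzZ) (hbZ z hzZ) fun x _ hxa hxb => ?_⟩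
  have hx : x ∈ insert a (insert b Z) := hW ▸ Finset.mem_univ x
  simp only [Finset.mem_insert, hxa, hxb, false_or] at hx
  exact ⟨hZa x hx, hbZ x hx⟩

theorem Semicomplete.exists_ne_isStrong_restrict_ne (hsc : Semicomplete A) (hst : IsStrong A)
    (hcard : 4 ≤ Fintype.card X) (p : X) :
    ∃ g ≠ p, IsStrong (Restrict A {w | w ≠ g}) := by
  classical
  let P : Finset X → Prop := fun Z => p ∈ Z ∧ Z ≠ Finset.univ ∧ IsStrong (Restrict A ↑Z)
  have hP : P {p} := by
    refine ⟨Finset.mem_singleton_self p, fun h => ?_, ?_⟩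
    · have := congrArg Finset.card h
      rw [Finset.card_singleton, Finset.card_univ] at this
      omega
    · rintro ⟨x, hx⟩ ⟨y, hy⟩
      obtain rfl : x = p := by simpa using hx
      obtain rfl : y = x := by simpa using hy
      exact .refl
  obtain ⟨Z, hZ, hmax⟩ :=
    (Finset.univ.filter P).exists_max_image Finset.card ⟨{p}, by simpa using hP⟩
  obtain ⟨hpZ, hZne, hZstrong⟩ : P Z := by simpa using hZ
  refine hsc.exists_ne_isStrong_restrict_ne_of_maximal hst hcard hpZ hZstrong hZne
    fun W hZW hW => ?_
  by_contra hne
  exact (Finset.card_lt_card hZW).not_ge (hmax W (by simpa [P] using ⟨hZW.subset hpZ, hne, hW⟩))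

theorem Semicomplete.exists_two_isStrong_restrict_ne (hsc : Semicomplete A) (hst : IsStrong A)
    (hcard : 4 ≤ Fintype.card X) :
    ∃ v₁ v₂ : X, v₁ ≠ v₂ ∧ IsStrong (Restrict A {w | w ≠ v₁}) ∧
      IsStrong (Restrict A {w | w ≠ v₂}) := by
  obtain ⟨p⟩ : Nonempty X := Fintype.card_pos_iff.1 (by omega)
  obtain ⟨g₁, -, hg₁⟩ := hsc.exists_ne_isStrong_restrict_ne hst hcard p
  obtain ⟨g₂, hg₂g₁, hg₂⟩ := hsc.exists_ne_isStrong_restrict_ne hst hcard g₁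
  exact ⟨g₂, g₁, hg₂g₁, hg₂, hg₁⟩

end Semicomplete

section Composition

variable {t : ℕ} {V : Fin t → Type*} {T : Fin t → Fin t → Prop} {H : ∀ i, V i → V i → Prop}

theorem reflTransGen_fst_of_reflTransGen_comp {p q : Σ i, V i}
    (h : ReflTransGen (Comp T V H) p q) : ReflTransGen T p.1 q.1 := by
  induction h with
  | refl => exact .refl
  | tail _ hbc ih =>
    rcases hbc with hT | ⟨he, -⟩
    · exact ih.tail hT
    · exact he ▸ ih

theorem IsStrong.of_comp [∀ i, Nonempty (V i)] (h : IsStrong (Comp T V H)) : IsStrong T :=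
  fun j k => reflTransGen_fst_of_reflTransGen_comp
    (h ⟨j, Classical.arbitrary _⟩ ⟨k, Classical.arbitrary _⟩)

theorem reflTransGen_restrict_comp_of_transGen {s : Set (Σ i, V i)}
    (hs : ∀ j, ∃ w ∈ s, w.1 = j) {p q : s} (h : TransGen T p.1.1 q.1.1) :
    ReflTransGen (Restrict (Comp T V H) s) p q := by
  choose r hrs hr using hs
  suffices ∀ j, TransGen T j q.1.1 → ∀ p : s, p.1.1 = j →
      ReflTransGen (Restrict (Comp T V H) s) p q from this _ h p rfl
  intro j hj
  induction hj using TransGen.head_induction_on with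
  | single hT =>
    rintro p rfl
    exact .single (Or.inl hT)
  | @head i k hT _ ih =>
    rintro p rfl
    exact .head (b := ⟨r k, hrs k⟩) (Or.inl (by rw [hr]; exact hT)) (ih _ (hr k))

theorem isStrong_restrict_comp (ht : 2 ≤ t) (hT : IsStrong T) {s : Set (Σ i, V i)}
    (hs : ∀ j, ∃ w ∈ s, w.1 = j) : IsStrong (Restrict (Comp T V H) s) :=
  have : Nontrivial (Fin t) := Fin.nontrivial_iff_two_le.2 ht
  fun _ _ => reflTransGen_restrict_comp_of_transGen hs (hT.transGen _ _)

theorem exists_ne_fst_eq [∀ i, Nonempty (V i)] {i : Fin t} {x y : V i} (hxy : x ≠ y) (j : Fin t) :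
    ∃ w ∈ {w : Σ i, V i | w ≠ ⟨i, x⟩}, w.1 = j := by
  by_cases hj : j = i
  · subst hj
    exact ⟨⟨j, y⟩, by simpa using hxy.symm, rfl⟩
  · exact ⟨⟨j, Classical.arbitrary _⟩, fun h => hj (congrArg Sigma.fst h), rfl⟩

theorem Semicomplete.comp [∀ i, Subsingleton (V i)] (hsc : Semicomplete T) :
    Semicomplete (Comp T V H) := by
  rintro ⟨i, x⟩ ⟨j, y⟩ hne
  have hij : i ≠ j := by
    rintro rfl
    exact hne (by rw [Subsingleton.elim x y])
  exact (hsc i j hij).imp Or.inl Or.inl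

end Composition

theorem stmt2_general {t : ℕ} (ht : 2 ≤ t) (V : Fin t → Type u) [∀ i, Fintype (V i)]
    [∀ i, Nonempty (V i)] (T : Fin t → Fin t → Prop) (H : ∀ i, V i → V i → Prop)
    (hsc : Semicomplete T)
    (hstrong : IsStrong (Comp T V H))
    (hcard : 4 ≤ Fintype.card (Σ i, V i)) :
    ∃ v₁ v₂ : Σ i, V i, v₁ ≠ v₂ ∧
      IsStrong (Restrict (Comp T V H) {w | w ≠ v₁}) ∧
      IsStrong (Restrict (Comp T V H) {w | w ≠ v₂}) := by
  by_cases hsub : ∀ i, Subsingleton (V i)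
  · exact (hsc.comp (H := H)).exists_two_isStrong_restrict_ne hstrong hcard
  · push Not at hsub
    obtain ⟨i, hi⟩ := hsub
    obtain ⟨x, y, hxy⟩ := hi.exists_pair_ne
    exact ⟨⟨i, x⟩, ⟨i, y⟩, by simpa using hxy,
      isStrong_restrict_comp ht hstrong.of_comp (exists_ne_fst_eq hxy),
      isStrong_restrict_comp ht hstrong.of_comp (exists_ne_fst_eq hxy.symm)⟩

/-- Every strong semicomplete composition with at least four vertices has two
distinct vertices whose individual deletion leaves a strong digraph. -/
theorem stmt2 {t : ℕ} (ht : 2 ≤ t) (V : Fin t → Type u) [∀ i, Fintype (V i)]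
    [∀ i, Nonempty (V i)] (T : Fin t → Fin t → Prop) (H : ∀ i, V i → V i → Prop)
    (hTl : Loopless T) (hHl : ∀ i, Loopless (H i)) (hsc : Semicomplete T)
    (hstrong : IsStrong (Comp T V H))
    (hcard : 4 ≤ Fintype.card (Σ i, V i)) :
    ∃ v₁ v₂ : Σ i, V i, v₁ ≠ v₂ ∧
      IsStrong (Restrict (Comp T V H) {w | w ≠ v₁}) ∧
      IsStrong (Restrict (Comp T V H) {w | w ≠ v₂}) :=
  stmt2_general ht V T H hsc hstrong hcard
end

section
/- Let k ≥ 2 be an integer and let Q = T[H_1, …, H_t] be a digraph composition. Then Q has a k-king if and only if T has a k-king u_i for some i ∈ [t] and at least one of the following holds: (i) H_i has a k-king; (ii) |V(H_i)| ≥ 2 and u_i belongs to a directed cycle of T of length at most k. -/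
universe u v

/-!
A walk in `T[H₁, …, H_t]` projects to a walk of the same length in `T`, and a walk of `T`
between distinct vertices lifts to a walk between any two vertices of the corresponding parts.
Hence `(i, a)` is a `k`-king of the composition iff `u_i` is a `k`-king of `T` and `(i, a)`
reaches every vertex of its own part within `k` steps: either inside `H_i`, or by leaving the
part and coming back, i.e. along a closed walk of `T` through `u_i` of length at most `k`.
Shortening such a closed walk gives a cycle through `u_i` of length at most `k`, and a part
with a single vertex is its own `k`-king.
-/

section Walks

variable {α : Type*} {A : α → α → Prop}

theorem reachIn_refl (n : ℕ) (x : α) : ReachIn A n x x := by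
  cases n <;> simp [ReachIn]

namespace ReachIn

theorem succ {n : ℕ} {x y : α} (h : ReachIn A n x y) : ReachIn A (n + 1) x y := by
  induction n generalizing x with
  | zero => exact Or.inl h
  | succ n ih => exact h.imp_right fun ⟨z, hxz, hzy⟩ => ⟨z, hxz, ih hzy⟩

theorem mono {n m : ℕ} (hnm : n ≤ m) {x y : α} (h : ReachIn A n x y) : ReachIn A m x y := by
  induction hnm with
  | refl => exact h
  | step _ ih => exact ih.succ

theorem exists_isPathList {n : ℕ} {x y : α} (h : ReachIn A n x y) :
    ∃ l, IsPathList A (x :: l) ∧ (x :: l).getLast? = some y ∧ l.length ≤ n := by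
  induction n generalizing x with
  | zero =>
    obtain rfl : x = y := h
    exact ⟨[], ⟨List.nodup_singleton x, List.isChain_singleton x⟩, rfl, le_rfl⟩
  | succ n ih =>
    rcases h with rfl | ⟨z, hxz, hzy⟩
    · exact ⟨[], ⟨List.nodup_singleton x, List.isChain_singleton x⟩, rfl, by simp⟩
    obtain ⟨l, ⟨hnd, hch⟩, hlast, hlen⟩ := ih hzy
    by_cases hx : x ∈ z :: l
    · -- cut the path where it revisits `x`
      obtain ⟨s, r, hs⟩ := List.append_of_mem hx
      rw [hs] at hnd hch hlast
      refine ⟨r, ⟨hnd.sublist (List.sublist_append_right s _), hch.right_of_append⟩, ?_, ?_⟩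
      · rwa [List.getLast?_append_of_ne_nil _ (List.cons_ne_nil x r)] at hlast
      · have := congrArg List.length hs
        simp only [List.length_cons, List.length_append] at this
        omega
    · exact ⟨z :: l, ⟨List.nodup_cons.2 ⟨hx, hnd⟩, List.IsChain.cons_cons hxz hch⟩, hlast,
        by simpa using hlen⟩

end ReachIn

theorem reachIn_of_isChain {x : α} {l : List α} (h : List.IsChain A (x :: l)) :
    ReachIn A l.length x ((x :: l).getLast (List.cons_ne_nil x l)) := by
  induction l generalizing x with
  | nil => rfl
  | cons z l ih =>
    obtain ⟨hxz, hzl⟩ := List.isChain_cons_cons.1 h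
    exact Or.inr ⟨z, hxz, by simpa [List.getLast_cons_cons] using ih hzl⟩

theorem IsCycleList.cycle_chain {l : List α} (hc : IsCycleList A l) :
    Cycle.Chain A (l : Cycle α) := by
  obtain ⟨-, -, hch, hwrap⟩ := hc
  cases l with
  | nil => exact Cycle.Chain.nil A
  | cons a m =>
    rw [Cycle.chain_coe_cons, ← List.cons_append]
    exact List.isChain_append.2 ⟨hch, List.isChain_singleton a,
      fun x hx y hy => hwrap x hx y (by simpa using hy)⟩

theorem exists_isCycleList_mem_iff (hA : Loopless A) {n : ℕ} {x : α} :
    (∃ l, IsCycleList A l ∧ l.length ≤ n + 1 ∧ x ∈ l) ↔ ∃ y, A x y ∧ ReachIn A n y x := by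
  constructor
  · rintro ⟨l, hc, hlen, hx⟩
    obtain ⟨s, r, rfl⟩ := List.append_of_mem hx
    have hrot : ((s ++ x :: r : List α) : Cycle α) = ((x :: (r ++ s) : List α) : Cycle α) :=
      Cycle.coe_eq_coe.2 (by simpa using List.isRotated_append (l := s) (l' := x :: r))
    have hch := hc.cycle_chain
    rw [hrot, Cycle.chain_coe_cons] at hch
    obtain ⟨y, w, hw⟩ : ∃ y w, r ++ s = y :: w := by
      cases h : r ++ s with
      | nil =>
        obtain ⟨rfl, rfl⟩ := List.append_eq_nil_iff.1 h
        exact absurd hc.1 (by simp)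
      | cons y w => exact ⟨y, w, rfl⟩
    rw [hw, List.cons_append, List.isChain_cons_cons] at hch
    have hwalk : ReachIn A (w.length + 1) y x := by simpa using reachIn_of_isChain hch.2
    have hw_len := congrArg List.length hw
    simp only [List.length_append, List.length_cons] at hw_len hlen
    exact ⟨y, hch.1, hwalk.mono (by omega)⟩
  · rintro ⟨y, hxy, hyx⟩
    obtain ⟨l, ⟨hnd, hch⟩, hlast, hlen⟩ := hyx.exists_isPathList
    have hyx : y ≠ x := fun h => hA x (h ▸ hxy)
    refine ⟨y :: l, ⟨?_, hnd, hch, ?_⟩, by simpa using hlen, ?_⟩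
    · cases l with
      | nil => exact absurd (by simpa using hlast) hyx
      | cons => simp
    · intro a ha b hb
      rw [hlast, Option.mem_some_iff] at ha
      rw [List.head?_cons, Option.mem_some_iff] at hb
      subst ha hb
      exact hxy
    · exact List.mem_of_getLast? hlast

theorem isKKing_of_subsingleton [Subsingleton α] (n : ℕ) (x : α) : IsKKing A n x :=
  fun y => Subsingleton.elim x y ▸ reachIn_refl n x

end Walks

section Composition

variable {t : ℕ} {T : Fin t → Fin t → Prop} {V : Fin t → Type*} {H : ∀ i, V i → V i → Prop}

theorem ReachIn.comp_fst {n : ℕ} {p q : Σ i, V i} (h : ReachIn (Comp T V H) n p q) :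
    ReachIn T n p.1 q.1 := by
  induction n generalizing p with
  | zero => exact congrArg Sigma.fst h
  | succ n ih =>
    rcases h with rfl | ⟨z, hT | ⟨hpz, -⟩, hzq⟩
    · exact reachIn_refl _ _
    · exact Or.inr ⟨z.1, hT, ih hzq⟩
    · exact hpz ▸ (ih hzq).succ

theorem ReachIn.comp_mk {n : ℕ} {i : Fin t} {a b : V i} (h : ReachIn (H i) n a b) :
    ReachIn (Comp T V H) n ⟨i, a⟩ ⟨i, b⟩ := by
  induction n generalizing a with
  | zero => exact congrArg _ h
  | succ n ih =>
    rcases h with rfl | ⟨c, hac, hcb⟩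
    · exact Or.inl rfl
    · exact Or.inr ⟨⟨i, c⟩, Or.inr ⟨rfl, hac⟩, ih hcb⟩

theorem ReachIn.comp_of_ne [∀ i, Nonempty (V i)] {n : ℕ} {i j : Fin t} (h : ReachIn T n i j)
    (hij : i ≠ j) (a : V i) (b : V j) : ReachIn (Comp T V H) n ⟨i, a⟩ ⟨j, b⟩ := by
  induction n generalizing i with
  | zero => exact absurd h hij
  | succ n ih =>
    rcases h with h | ⟨z, hiz, hzj⟩
    · exact absurd h hij
    by_cases hz : z = j
    · subst hz
      exact Or.inr ⟨⟨z, b⟩, Or.inl hiz, reachIn_refl n _⟩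
    · exact Or.inr ⟨⟨z, Classical.arbitrary (V z)⟩, Or.inl hiz, ih hzj hz _⟩

theorem ReachIn.of_comp_mk_mk {n : ℕ} {i : Fin t} {a b : V i}
    (h : ReachIn (Comp T V H) n ⟨i, a⟩ ⟨i, b⟩) :
    ReachIn (H i) n a b ∨ ∃ j, T i j ∧ ReachIn T (n - 1) j i := by
  induction n generalizing a with
  | zero => exact Or.inl (eq_of_heq (Sigma.mk.inj h).2)
  | succ n ih =>
    rcases h with h | ⟨⟨j, c⟩, hij | ⟨hij, hac⟩, hcb⟩
    · exact Or.inl (Or.inl (eq_of_heq (Sigma.mk.inj h).2))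
    · exact Or.inr ⟨j, hij, hcb.comp_fst⟩
    · obtain rfl : i = j := hij
      exact (ih hcb).imp (fun hcb => Or.inr ⟨c, hac, hcb⟩)
        fun ⟨j, hij, hji⟩ => ⟨j, hij, hji.mono (Nat.sub_le n 1)⟩

theorem reachIn_comp_mk_mk_iff [∀ i, Nonempty (V i)] (hT : Loopless T) {n : ℕ} {i : Fin t}
    {a b : V i} :
    ReachIn (Comp T V H) (n + 1) ⟨i, a⟩ ⟨i, b⟩ ↔
      ReachIn (H i) (n + 1) a b ∨ ∃ j, T i j ∧ ReachIn T n j i := by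
  constructor
  · exact ReachIn.of_comp_mk_mk
  · rintro (h | ⟨j, hij, hji⟩)
    · exact h.comp_mk
    · have hne : j ≠ i := fun h => hT i (h ▸ hij)
      exact Or.inr ⟨⟨j, Classical.arbitrary (V j)⟩, Or.inl hij, hji.comp_of_ne hne _ b⟩

theorem isKKing_comp_mk_iff [∀ i, Nonempty (V i)] (hT : Loopless T) {n : ℕ} {i : Fin t}
    {a : V i} :
    IsKKing (Comp T V H) (n + 1) ⟨i, a⟩ ↔
      IsKKing T (n + 1) i ∧ (IsKKing (H i) (n + 1) a ∨ ∃ j, T i j ∧ ReachIn T n j i) := by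
  unfold IsKKing
  rw [← forall_or_right]
  constructor
  · intro h
    exact ⟨fun j => (h ⟨j, Classical.arbitrary (V j)⟩).comp_fst,
      fun b => reachIn_comp_mk_mk_iff hT |>.1 (h ⟨i, b⟩)⟩
  · rintro ⟨hTi, hHi⟩ ⟨j, b⟩
    by_cases hij : i = j
    · subst hij
      exact reachIn_comp_mk_mk_iff hT |>.2 (hHi b)
    · exact (hTi j).comp_of_ne hij a b

end Composition

theorem stmt4_general {t : ℕ} (V : Fin t → Type u) [∀ i, Fintype (V i)]
    [∀ i, Nonempty (V i)] (T : Fin t → Fin t → Prop) (H : ∀ i, V i → V i → Prop)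
    (hTl : Loopless T)
    (k : ℕ) (hk : 2 ≤ k) :
    (∃ x : Σ i, V i, IsKKing (Comp T V H) k x) ↔
      ∃ i : Fin t, IsKKing T k i ∧
        ((∃ x : V i, IsKKing (H i) k x) ∨
          (2 ≤ Fintype.card (V i) ∧
            ∃ l : List (Fin t), IsCycleList T l ∧ l.length ≤ k ∧ i ∈ l)) := by
  obtain ⟨n, rfl⟩ : ∃ n, k = n + 1 := ⟨k - 1, by omega⟩
  simp only [Sigma.exists, isKKing_comp_mk_iff hTl, exists_isCycleList_mem_iff hTl]
  refine exists_congr fun i => ?_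
  have hcard : (¬ ∃ a, IsKKing (H i) (n + 1) a) → 2 ≤ Fintype.card (V i) := by
    intro hH
    by_contra hlt
    have : Subsingleton (V i) := Fintype.card_le_one_iff_subsingleton.1 (by omega)
    exact hH ⟨Classical.arbitrary _, isKKing_of_subsingleton _ _⟩
  constructor
  · rintro ⟨a, hTi, ha | hcyc⟩
    · exact ⟨hTi, Or.inl ⟨a, ha⟩⟩
    · by_cases hH : ∃ a, IsKKing (H i) (n + 1) a
      · exact ⟨hTi, Or.inl hH⟩
      · exact ⟨hTi, Or.inr ⟨hcard hH, hcyc⟩⟩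
  · rintro ⟨hTi, ⟨a, ha⟩ | ⟨-, hcyc⟩⟩
    · exact ⟨a, hTi, Or.inl ha⟩
    · exact ⟨Classical.arbitrary _, hTi, Or.inr hcyc⟩

/-- For `k ≥ 2`, a composition `Q = T[H₁,…,H_t]` has a `k`-king if and only if
`T` has a `k`-king `u_i` such that either `H_i` has a `k`-king, or `|V(H_i)| ≥ 2` and `u_i`
lies on a directed cycle of `T` of length at most `k`. -/
theorem stmt4 {t : ℕ} (ht : 2 ≤ t) (V : Fin t → Type u) [∀ i, Fintype (V i)]
    [∀ i, Nonempty (V i)] (T : Fin t → Fin t → Prop) (H : ∀ i, V i → V i → Prop)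
    (hTl : Loopless T) (hHl : ∀ i, Loopless (H i))
    (k : ℕ) (hk : 2 ≤ k) :
    (∃ x : Σ i, V i, IsKKing (Comp T V H) k x) ↔
      ∃ i : Fin t, IsKKing T k i ∧
        ((∃ x : V i, IsKKing (H i) k x) ∨
          (2 ≤ Fintype.card (V i) ∧
            ∃ l : List (Fin t), IsCycleList T l ∧ l.length ≤ k ∧ i ∈ l)) :=
  stmt4_general V T H hTl k hk
end

section
/- Let Q = T[H_1, …, H_t] be a semicomplete composition such that T has no sink. Then Q contains a pair of disjoint quasi-kernels. In particular, every strong semicomplete composition contains a pair of disjoint quasi-kernels. -/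
universe u v

/-- A set of vertices is independent if it spans no arc. -/
def IsIndepSet {V : Type u} (A : V → V → Prop) (K : Set V) : Prop :=
  ∀ x ∈ K, ∀ y ∈ K, ¬ A x y

/-- A quasi-kernel: an independent set `K` such that every vertex outside `K` reaches `K`
by a path of length at most two. -/
def IsQuasiKernel {V : Type u} (A : V → V → Prop) (K : Set V) : Prop :=
  IsIndepSet A K ∧ ∀ x ∉ K,
    (∃ z ∈ K, A x z) ∨ (∃ y ∉ K, ∃ z ∈ K, A x y ∧ A y z)

/-!
Every finite loopless digraph has a quasi-kernel (Chvátal–Lovász). In a loopless semicomplete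
digraph `T` a vertex `v` of maximum in-degree is reached from every vertex in at most two steps,
i.e. `{v}` is a quasi-kernel; if `T` has no sink, a vertex `u` of maximum in-degree among the
out-neighbours of `v` has the same property, since every other vertex reaches `u` through `v` or
inside the out-neighbourhood of `v`. A quasi-kernel of `H_i` with `{i}` a quasi-kernel of `T` is
a quasi-kernel of `T[H_1, …, H_t]`, so `u ≠ v` yield two disjoint quasi-kernels. A strong
composition has no sink in `T`, since leaving the block `H_i` requires an arc of `T` out of `i`.
-/

open Finset Relation

section QuasiKernel

variable {α : Type*} {A : α → α → Prop}

theorem exists_quasiKernel_within (hl : Loopless A) (s : Finset α) :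
    ∃ K : Set α, K ⊆ s ∧ IsIndepSet A K ∧ ∀ x ∈ s, x ∉ K →
      (∃ z ∈ K, A x z) ∨ ∃ y ∈ s, y ∉ K ∧ ∃ z ∈ K, A x y ∧ A y z := by
  classical
  induction s using Finset.strongInduction with
  | _ s ih =>
  obtain rfl | ⟨v, hv⟩ := s.eq_empty_or_nonempty
  · exact ⟨∅, by simp, by simp [IsIndepSet], by simp⟩
  -- recurse on the vertices outside the closed in-neighbourhood of `v`
  set s' := s.filter (fun x => x ≠ v ∧ ¬ A x v)
  obtain ⟨K, hKs', hKind, hKcov⟩ := ih s' (filter_ssubset.mpr ⟨v, hv, by simp⟩)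
  have hKs : K ⊆ s := fun x hx => (mem_filter.mp (hKs' hx)).1
  have hK_v : ∀ x ∈ K, x ≠ v ∧ ¬ A x v := fun x hx => (mem_filter.mp (hKs' hx)).2
  have hvK : v ∉ K := fun h => (hK_v v h).1 rfl
  have h_to_v : ∀ x ∈ s, x ∉ s' → x ≠ v → A x v := fun x hx hxs' hxv => by
    by_contra h
    exact hxs' (mem_filter.mpr ⟨hx, hxv, h⟩)
  by_cases hvq : ∃ q ∈ K, A v q
  · obtain ⟨q, hqK, hvq⟩ := hvq
    refine ⟨K, hKs, hKind, fun x hx hxK => ?_⟩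
    by_cases hxs' : x ∈ s'
    · rcases hKcov x hxs' hxK with h | ⟨y, hy, hyK, h⟩
      · exact Or.inl h
      · exact Or.inr ⟨y, (mem_filter.mp hy).1, hyK, h⟩
    · by_cases hxv : x = v
      · exact Or.inl ⟨q, hqK, hxv ▸ hvq⟩
      · exact Or.inr ⟨v, hv, hvK, q, hqK, h_to_v x hx hxs' hxv, hvq⟩
  · push Not at hvq
    refine ⟨insert v K, Set.insert_subset (mem_coe.mpr hv) hKs, ?_, fun x hx hxvK => ?_⟩
    · rintro x (rfl | hx) y (rfl | hy)
      exacts [hl _, hvq _ hy, (hK_v _ hx).2, hKind _ hx _ hy]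
    · obtain ⟨hxv, hxK⟩ : x ≠ v ∧ x ∉ K := by simpa using hxvK
      by_cases hxs' : x ∈ s'
      · rcases hKcov x hxs' hxK with ⟨z, hz, h⟩ | ⟨y, hy, hyK, z, hz, h⟩
        · exact Or.inl ⟨z, Set.mem_insert_of_mem v hz, h⟩
        · obtain ⟨hys, hyv, -⟩ := mem_filter.mp hy
          exact Or.inr ⟨y, hys, by simp [hyv, hyK], z, Set.mem_insert_of_mem v hz, h⟩
      · exact Or.inl ⟨v, Set.mem_insert v K, h_to_v x hx hxs' hxv⟩

theorem exists_isQuasiKernel [Fintype α] (hl : Loopless A) : ∃ K, IsQuasiKernel A K := by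
  obtain ⟨K, -, hind, hcov⟩ := exists_quasiKernel_within hl univ
  exact ⟨K, hind, fun x hx => (hcov x (mem_univ x) hx).imp id fun ⟨y, _, hy⟩ => ⟨y, hy⟩⟩

theorem IsQuasiKernel.nonempty [Nonempty α] {K : Set α} (hK : IsQuasiKernel A K) :
    K.Nonempty := by
  obtain ⟨a⟩ := ‹Nonempty α›
  by_contra h
  rw [Set.not_nonempty_iff_eq_empty] at h
  subst h
  simpa using hK.2 a (Set.notMem_empty a)

theorem isQuasiKernel_singleton {v : α} (hv : ¬ A v v)
    (h : ∀ p, p ≠ v → A p v ∨ ∃ q, A p q ∧ A q v) : IsQuasiKernel A {v} := by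
  refine ⟨by simpa [IsIndepSet] using hv, fun p hp => ?_⟩
  rcases h p hp with h | ⟨q, hpq, hqv⟩
  · exact Or.inl ⟨v, rfl, h⟩
  · exact Or.inr ⟨q, fun hq => hv (hq ▸ hqv), v, rfl, hpq, hqv⟩

end QuasiKernel

section Semicomplete

variable {α : Type*} {T : α → α → Prop}

theorem Semicomplete.exists_reached_within_two (hl : Loopless T) (hsc : Semicomplete T)
    {s : Finset α} (hs : s.Nonempty) :
    ∃ u ∈ s, ∀ p ∈ s, p ≠ u → T p u ∨ ∃ q ∈ s, T p q ∧ T q u := by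
  classical
  obtain ⟨u, hu, hmax⟩ := s.exists_max_image (fun w => (s.filter (T · w)).card) hs
  refine ⟨u, hu, fun p hp hpu => ?_⟩
  by_contra! hcon
  obtain ⟨hpu', hno⟩ := hcon
  -- otherwise `p` would have strictly larger in-degree in `s` than `u`
  have hsub : insert u (s.filter (T · u)) ⊆ s.filter (T · p) := by
    intro q hq
    rcases mem_insert.mp hq with rfl | hq
    · exact mem_filter.mpr ⟨hu, (hsc p q hpu).resolve_left hpu'⟩
    · obtain ⟨hqs, hqu⟩ := mem_filter.mp hq
      have hqp : p ≠ q := fun h => hpu' (h ▸ hqu)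
      exact mem_filter.mpr ⟨hqs, (hsc p q hqp).resolve_left fun hpq => hno q hqs hpq hqu⟩
  have hcard := card_le_card hsub
  rw [card_insert_of_notMem (by simp [hl u])] at hcard
  have := hmax p hp
  omega

theorem Semicomplete.exists_two_singleton_isQuasiKernel [Fintype α] [Nonempty α]
    (hl : Loopless T) (hsc : Semicomplete T) (hns : ∀ i, ∃ j, T i j) :
    ∃ i j, i ≠ j ∧ IsQuasiKernel T {i} ∧ IsQuasiKernel T {j} := by
  classical
  obtain ⟨v, -, hv⟩ := hsc.exists_reached_within_two hl univ_nonempty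
  have hout : (univ.filter (T v ·)).Nonempty := by
    obtain ⟨j, hj⟩ := hns v
    exact ⟨j, by simpa using hj⟩
  obtain ⟨u, hu, hu_reached⟩ := hsc.exists_reached_within_two hl hout
  have hvu : T v u := (mem_filter.mp hu).2
  refine ⟨v, u, by rintro rfl; exact hl v hvu, ?_, ?_⟩
  · exact isQuasiKernel_singleton (hl v) fun p hp => by simpa using hv p (mem_univ p) hp
  · refine isQuasiKernel_singleton (hl u) fun p hp => ?_
    by_cases hvp : T v p
    · rcases hu_reached p (by simpa using hvp) hp with h | ⟨q, -, h⟩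
      exacts [Or.inl h, Or.inr ⟨q, h⟩]
    · by_cases hpv : p = v
      · exact Or.inl (hpv ▸ hvu)
      · exact Or.inr ⟨v, (hsc p v hpv).resolve_right hvp, hvu⟩

end Semicomplete

section Composition

variable {t : ℕ} {T : Fin t → Fin t → Prop} {V : Fin t → Type*} {H : ∀ i, V i → V i → Prop}

theorem IsQuasiKernel.comp [∀ i, Nonempty (V i)] {i : Fin t} {K : Set (V i)}
    (hT : IsQuasiKernel T {i}) (hK : IsQuasiKernel (H i) K) :
    IsQuasiKernel (Comp T V H) (Sigma.mk i '' K) := by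
  obtain ⟨a, ha⟩ := hK.nonempty
  have hmem : ∀ y, (⟨i, y⟩ : Σ j, V j) ∈ Sigma.mk i '' K ↔ y ∈ K :=
    fun y => sigma_mk_injective.mem_set_image
  refine ⟨?_, ?_⟩
  · rintro _ ⟨x, hx, rfl⟩ _ ⟨y, hy, rfl⟩ (hii | ⟨_, hxy⟩)
    exacts [hT.1 i rfl i rfl hii, hK.1 x hx y hy hxy]
  · rintro ⟨p, b⟩ hb
    by_cases hpi : p = i
    · subst hpi
      rcases hK.2 b ((hmem b).not.mp hb) with ⟨z, hz, hbz⟩ | ⟨y, hyK, z, hz, hby, hyz⟩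
      · exact Or.inl ⟨⟨p, z⟩, (hmem z).mpr hz, Or.inr ⟨rfl, hbz⟩⟩
      · exact Or.inr ⟨⟨p, y⟩, (hmem y).not.mpr hyK, ⟨p, z⟩, (hmem z).mpr hz,
          Or.inr ⟨rfl, hby⟩, Or.inr ⟨rfl, hyz⟩⟩
    · rcases hT.2 p hpi with ⟨_, hz, hpz⟩ | ⟨q, hq, _, hz, hpq, hqz⟩
      · exact Or.inl ⟨⟨i, a⟩, ⟨a, ha, rfl⟩, Or.inl (Set.mem_singleton_iff.mp hz ▸ hpz)⟩
      · obtain ⟨c⟩ := ‹∀ i, Nonempty (V i)› q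
        refine Or.inr ⟨⟨q, c⟩, ?_, ⟨i, a⟩, ⟨a, ha, rfl⟩, Or.inl hpq, Or.inl (Set.mem_singleton_iff.mp hz ▸ hqz)⟩
        rintro ⟨d, -, hd⟩
        exact hq (congrArg Sigma.fst hd).symm

theorem exists_arc_of_reflTransGen_comp {x y : Σ i, V i}
    (hxy : ReflTransGen (Comp T V H) x y) (hne : x.1 ≠ y.1) : ∃ j, T x.1 j := by
  induction hxy using ReflTransGen.head_induction_on with
  | refl => exact absurd rfl hne
  | head harc _ ih =>
    rcases harc with hT | ⟨h, -⟩
    · exact ⟨_, hT⟩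
    · rw [h]
      exact ih (h ▸ hne)

theorem IsStrong.comp_exists_arc [∀ i, Nonempty (V i)] (ht : 2 ≤ t)
    (h : IsStrong (Comp T V H)) (i : Fin t) : ∃ j, T i j := by
  have : Nontrivial (Fin t) := Fin.nontrivial_iff_two_le.mpr ht
  obtain ⟨j, hji⟩ := exists_ne i
  obtain ⟨a⟩ := ‹∀ i, Nonempty (V i)› i
  obtain ⟨b⟩ := ‹∀ i, Nonempty (V i)› j
  exact exists_arc_of_reflTransGen_comp (h ⟨i, a⟩ ⟨j, b⟩) hji.symm

end Composition

/-- A semicomplete composition whose `T` has no sink contains a pair of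
disjoint quasi-kernels; in particular this holds for every strong semicomplete
composition. -/
theorem stmt9 {t : ℕ} (ht : 2 ≤ t) (V : Fin t → Type u) [∀ i, Fintype (V i)]
    [∀ i, Nonempty (V i)] (T : Fin t → Fin t → Prop) (H : ∀ i, V i → V i → Prop)
    (hTl : Loopless T) (hHl : ∀ i, Loopless (H i)) (hsc : Semicomplete T) :
    ((∀ i : Fin t, ∃ j, T i j) →
      ∃ K₁ K₂ : Set (Σ i, V i), IsQuasiKernel (Comp T V H) K₁ ∧
        IsQuasiKernel (Comp T V H) K₂ ∧ Disjoint K₁ K₂) ∧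
    (IsStrong (Comp T V H) →
      ∃ K₁ K₂ : Set (Σ i, V i), IsQuasiKernel (Comp T V H) K₁ ∧
        IsQuasiKernel (Comp T V H) K₂ ∧ Disjoint K₁ K₂) := by
  have : Nonempty (Fin t) := ⟨⟨0, by omega⟩⟩
  have of_no_sink : (∀ i : Fin t, ∃ j, T i j) →
      ∃ K₁ K₂ : Set (Σ i, V i), IsQuasiKernel (Comp T V H) K₁ ∧
        IsQuasiKernel (Comp T V H) K₂ ∧ Disjoint K₁ K₂ := by
    intro hns
    obtain ⟨i, j, hij, hi, hj⟩ := hsc.exists_two_singleton_isQuasiKernel hTl hns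
    obtain ⟨K, hK⟩ := exists_isQuasiKernel (hHl i)
    obtain ⟨L, hL⟩ := exists_isQuasiKernel (hHl j)
    refine ⟨_, _, hi.comp hK, hj.comp hL, Set.disjoint_left.mpr ?_⟩
    rintro _ ⟨a, -, rfl⟩ ⟨b, -, hba⟩
    exact hij (congrArg Sigma.fst hba).symm
  exact ⟨of_no_sink, fun hstrong => of_no_sink (hstrong.comp_exists_arc ht)⟩
end

section
/- Let Q = T[H_1, …, H_t] be a digraph composition in which T is an acyclic digraph, and let q be a positive integer with q < ℓ(Q). Suppose that for each i ∈ [t] and each positive integer q_i with q_i < ℓ(H_i), there exists a partition (A_i, B_i) of V(H_i) such that ℓ(H_i[A_i]) ≤ q_i and ℓ(H_i[B_i]) ≤ ℓ(H_i) − q_i. Then there exists a partition (A, B) of V(Q) such that ℓ(Q[A]) ≤ q and ℓ(Q[B]) ≤ ℓ(Q) − q. -/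
universe u v

/-- The number of vertices of a longest directed path of the digraph `A`. -/
noncomputable def pathOrd {V : Type u} (A : V → V → Prop) : ℕ :=
  sSup {n | ∃ l : List V, l.Nodup ∧ l.Chain' A ∧ l.length = n}

/-!
For a block `i` let `λ i` be the number of vertices of a longest path of `Q` starting in `V(H_i)`.
Prepending a longest path of `H_i` shows `λ j + ℓ(H_i) ≤ λ i` for every arc `u_i u_j` (acyclicity
of `T` keeps the two pieces disjoint), and `λ i ≤ ℓ(Q)`. The partition property splits `H_i` into
`A_i`, `B_i` with `ℓ(H_i[A_i]) ≤ q - (λ i - ℓ(H_i))` and `ℓ(H_i[B_i]) ≤ λ i - q`. A path of `Q`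
passes through its blocks in segments along a path of `T`, so, segment by segment, a path of
`Q[⋃ A_i]` starting in `V(H_i)` has at most `min q (λ i)` vertices and a path of `Q[⋃ B_i]` at most
`λ i - q ≤ ℓ(Q) - q`.
-/

open List

section PathOrd

variable {W : Type*} {A : W → W → Prop}

noncomputable def pathOrdFrom (A : W → W → Prop) (s : Set W) : ℕ :=
  sSup {n | ∃ l : List W, l.Nodup ∧ l.IsChain A ∧ (∀ x ∈ l.head?, x ∈ s) ∧ l.length = n}

theorem pathOrd_eq_pathOrdFrom_univ (A : W → W → Prop) :
    pathOrd A = pathOrdFrom A Set.univ := by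
  simp only [pathOrd, pathOrdFrom, Set.mem_univ, implies_true, true_and]
  rfl

theorem pathOrdFrom_set_nonempty (A : W → W → Prop) (s : Set W) :
    {n | ∃ l : List W, l.Nodup ∧ l.IsChain A ∧ (∀ x ∈ l.head?, x ∈ s) ∧ l.length = n}.Nonempty :=
  ⟨0, [], by simp⟩

theorem pathOrdFrom_le {s : Set W} {m : ℕ}
    (h : ∀ l : List W, l.Nodup → l.IsChain A → (∀ x ∈ l.head?, x ∈ s) → l.length ≤ m) :
    pathOrdFrom A s ≤ m :=
  csSup_le (pathOrdFrom_set_nonempty A s) fun _ ⟨l, hn, hc, hs, hl⟩ => hl ▸ h l hn hc hs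

theorem pathOrd_le {m : ℕ} (h : ∀ l : List W, l.Nodup → l.IsChain A → l.length ≤ m) :
    pathOrd A ≤ m :=
  pathOrd_eq_pathOrdFrom_univ A ▸ pathOrdFrom_le fun l hn hc _ => h l hn hc

theorem pathOrd_restrict_le {s : Set W} {m : ℕ}
    (h : ∀ l : List W, l.Nodup → l.IsChain A → (∀ x ∈ l, x ∈ s) → l.length ≤ m) :
    pathOrd (Restrict A s) ≤ m :=
  pathOrd_le fun l hn hc => by
    simpa using h (l.map Subtype.val) (hn.map Subtype.val_injective)
      ((isChain_map _).2 hc) (by simp_all)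

theorem pathOrd_restrict_empty : pathOrd (Restrict A ∅) = 0 :=
  Nat.eq_zero_of_le_zero <| pathOrd_restrict_le fun l _ _ hl => by
    cases l with
    | nil => rfl
    | cons x _ => exact absurd (hl x mem_cons_self) (Set.notMem_empty x)

variable [Finite W]

theorem bddAbove_pathOrdFrom_set (A : W → W → Prop) (s : Set W) :
    BddAbove
      {n | ∃ l : List W, l.Nodup ∧ l.IsChain A ∧ (∀ x ∈ l.head?, x ∈ s) ∧ l.length = n} := by
  have := Fintype.ofFinite W
  refine ⟨Fintype.card W, ?_⟩
  rintro _ ⟨l, hn, -, -, rfl⟩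
  exact hn.length_le_card

theorem length_le_pathOrdFrom {s : Set W} {l : List W} (hn : l.Nodup) (hc : l.IsChain A)
    (hs : ∀ x ∈ l.head?, x ∈ s) : l.length ≤ pathOrdFrom A s :=
  le_csSup (bddAbove_pathOrdFrom_set A s) ⟨l, hn, hc, hs, rfl⟩

theorem exists_length_eq_pathOrdFrom (A : W → W → Prop) (s : Set W) :
    ∃ l : List W, l.Nodup ∧ l.IsChain A ∧ (∀ x ∈ l.head?, x ∈ s) ∧
      l.length = pathOrdFrom A s :=
  Nat.sSup_mem (pathOrdFrom_set_nonempty A s) (bddAbove_pathOrdFrom_set A s)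

theorem pathOrdFrom_le_pathOrd (s : Set W) : pathOrdFrom A s ≤ pathOrd A :=
  pathOrdFrom_le fun _ hn hc _ =>
    pathOrd_eq_pathOrdFrom_univ A ▸ length_le_pathOrdFrom hn hc (by simp)

theorem length_le_pathOrd {l : List W} (hn : l.Nodup) (hc : l.IsChain A) :
    l.length ≤ pathOrd A :=
  pathOrd_eq_pathOrdFrom_univ A ▸ length_le_pathOrdFrom hn hc (by simp)

theorem exists_length_eq_pathOrd (A : W → W → Prop) :
    ∃ l : List W, l.Nodup ∧ l.IsChain A ∧ l.length = pathOrd A := by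
  obtain ⟨l, hn, hc, -, hl⟩ := exists_length_eq_pathOrdFrom A Set.univ
  exact ⟨l, hn, hc, hl.trans (pathOrd_eq_pathOrdFrom_univ A).symm⟩

theorem pathOrd_pos [Nonempty W] : 0 < pathOrd A :=
  length_le_pathOrd (l := [Classical.arbitrary W]) (nodup_singleton _) (isChain_singleton _)

theorem length_le_pathOrd_restrict {s : Set W} {l : List W} (hn : l.Nodup) (hc : l.IsChain A)
    (hs : ∀ x ∈ l, x ∈ s) : l.length ≤ pathOrd (Restrict A s) := by
  simpa using length_le_pathOrd (A := Restrict A s) (l := l.pmap Subtype.mk hs)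
    (hn.pmap fun _ _ _ _ h => congrArg Subtype.val h)
    (isChain_pmap_of_isChain (S := Restrict A s) (f := Subtype.mk) (fun _ _ _ _ h => h) hc hs)

theorem pathOrd_restrict_le_pathOrd (s : Set W) : pathOrd (Restrict A s) ≤ pathOrd A :=
  pathOrd_restrict_le fun _ hn hc _ => length_le_pathOrd hn hc

end PathOrd

def HasPathPartition {W : Type*} (A : W → W → Prop) : Prop :=
  ∀ q : ℕ, 0 < q → q < pathOrd A →
    ∃ s : Set W, pathOrd (Restrict A s) ≤ q ∧ pathOrd (Restrict A sᶜ) ≤ pathOrd A - q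

theorem HasPathPartition.exists_le_le {W : Type*} [Finite W] {A : W → W → Prop}
    (hA : HasPathPartition A) {x y : ℕ} (hxy : pathOrd A ≤ x + y) :
    ∃ s : Set W, pathOrd (Restrict A s) ≤ x ∧ pathOrd (Restrict A sᶜ) ≤ y := by
  by_cases hx : pathOrd A ≤ x
  · refine ⟨Set.univ, (pathOrd_restrict_le_pathOrd _).trans hx, ?_⟩
    rw [Set.compl_univ, pathOrd_restrict_empty]
    exact Nat.zero_le y
  by_cases hx₀ : x = 0
  · refine ⟨∅, by rw [pathOrd_restrict_empty]; exact Nat.zero_le x, ?_⟩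
    rw [Set.compl_empty]
    exact (pathOrd_restrict_le_pathOrd _).trans (by omega)
  obtain ⟨s, hs, hsc⟩ := hA x (by omega) (by omega)
  exact ⟨s, hs, hsc.trans (by omega)⟩

namespace Comp

variable {t : ℕ} {T : Fin t → Fin t → Prop} {V : Fin t → Type*} {H : ∀ i, V i → V i → Prop}

theorem isChain_map_mk {i : Fin t} {m : List (V i)} (hm : m.IsChain (H i)) :
    (m.map (Sigma.mk i)).IsChain (Comp T V H) :=
  (isChain_map _).2 (hm.imp fun _ _ h => Or.inr ⟨rfl, h⟩)

theorem isChain_of_isChain_map_mk (hTl : Loopless T) {i : Fin t} {m : List (V i)}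
    (hm : (m.map (Sigma.mk i)).IsChain (Comp T V H)) : m.IsChain (H i) :=
  ((isChain_map _).1 hm).imp fun _ _ h => h.resolve_left (hTl i) |>.elim fun _ h => h

theorem reflTransGen_fst {x y : Σ i, V i} (h : Comp T V H x y) :
    Relation.ReflTransGen T x.1 y.1 :=
  h.elim .single fun ⟨h, _⟩ => h ▸ .refl

theorem reflTransGen_of_mem {j : Fin t} {P : List (Σ i, V i)} (hP : P.IsChain (Comp T V H))
    (hhead : ∀ x ∈ P.head?, x.1 = j) : ∀ x ∈ P, Relation.ReflTransGen T j x.1 :=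
  hP.induction _ _ (fun _ _ h hx => hx.trans (reflTransGen_fst h))
    fun hne => hhead _ (head?_eq_some_head hne) ▸ .refl

variable [∀ i, Finite (V i)]

theorem pathOrd_le_pathOrdFrom (i : Fin t) :
    pathOrd (H i) ≤ pathOrdFrom (Comp T V H) (Sigma.fst ⁻¹' {i}) := by
  obtain ⟨m, hmn, hmc, hm⟩ := exists_length_eq_pathOrd (H i)
  rw [← hm, ← length_map (Sigma.mk i)]
  exact length_le_pathOrdFrom (hmn.map sigma_mk_injective) (isChain_map_mk hmc)
    fun x hx => by obtain ⟨v, -, rfl⟩ := mem_map.1 (mem_of_mem_head? hx); rfl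

theorem pathOrdFrom_add_pathOrd_le [∀ i, Nonempty (V i)]
    (hacyc : ∀ x, ¬ Relation.TransGen T x x) {i j : Fin t} (hT : T i j) :
    pathOrdFrom (Comp T V H) (Sigma.fst ⁻¹' {j}) + pathOrd (H i) ≤
      pathOrdFrom (Comp T V H) (Sigma.fst ⁻¹' {i}) := by
  obtain ⟨R, hRn, hRc, hRj, hR⟩ :=
    exists_length_eq_pathOrdFrom (Comp T V H) (Sigma.fst ⁻¹' {j})
  obtain ⟨m, hmn, hmc, hm⟩ := exists_length_eq_pathOrd (H i)
  have hm₀ : m ≠ [] := ne_nil_of_length_pos (hm ▸ pathOrd_pos)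
  have hmi : ∀ x ∈ m.map (Sigma.mk i), x.1 = i := by
    intro x hx
    obtain ⟨v, -, rfl⟩ := mem_map.1 hx
    rfl
  -- acyclicity of `T`: a path starting in block `j` never returns to block `i`
  have hRi : ∀ x ∈ R, x.1 ≠ i := fun x hx hxi =>
    hacyc i (.head' hT (hxi ▸ reflTransGen_of_mem hRc hRj x hx))
  rw [← hR, ← hm, ← length_map (Sigma.mk i), add_comm, ← length_append]
  refine length_le_pathOrdFrom ?_ ?_ ?_
  · exact nodup_append.2 ⟨hmn.map sigma_mk_injective, hRn,
      fun x hx y hy hxy => hRi y hy (hxy ▸ hmi x hx)⟩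
  · refine isChain_append.2 ⟨isChain_map_mk hmc, hRc, fun x hx y hy => Or.inl ?_⟩
    rw [hmi x (mem_of_mem_getLast? hx), show y.1 = j from hRj y hy]
    exact hT
  · rw [head?_append_of_ne_nil _ (by simpa using hm₀)]
    exact fun x hx => hmi x (mem_of_mem_head? hx)

theorem exists_potential [∀ i, Nonempty (V i)] (hacyc : ∀ x, ¬ Relation.TransGen T x x) :
    ∃ lam : Fin t → ℕ, (∀ i, pathOrd (H i) ≤ lam i) ∧
      (∀ i j, T i j → lam j + pathOrd (H i) ≤ lam i) ∧ ∀ i, lam i ≤ pathOrd (Comp T V H) :=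
  ⟨fun i => pathOrdFrom (Comp T V H) (Sigma.fst ⁻¹' {i}), pathOrd_le_pathOrdFrom,
    fun _ _ => pathOrdFrom_add_pathOrd_le hacyc, fun _ => pathOrdFrom_le_pathOrd _⟩

theorem length_le_pathOrd_restrict_of_append (hTl : Loopless T) {s : ∀ i, Set (V i)} {i : Fin t}
    {m : List (V i)} {P : List (Σ i, V i)} (hn : (m.map (Sigma.mk i) ++ P).Nodup)
    (hc : (m.map (Sigma.mk i) ++ P).IsChain (Comp T V H))
    (hs : ∀ x ∈ m.map (Sigma.mk i) ++ P, x.2 ∈ s x.1) :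
    m.length ≤ pathOrd (Restrict (H i) (s i)) :=
  length_le_pathOrd_restrict (hn.of_append_left.of_map _)
    (isChain_of_isChain_map_mk hTl hc.left_of_append)
    fun v hv => hs ⟨i, v⟩ (mem_append_left _ (mem_map_of_mem hv))

/-- Induction on the remainder `P` of a path whose first block segment `m` is split off: `P`
either continues the segment or enters a block `j` with `T i j`. -/
theorem length_add_length_le (hTl : Loopless T) {s : ∀ i, Set (V i)} {β : Fin t → ℕ}
    (hβ : ∀ i, 0 < pathOrd (Restrict (H i) (s i)) → pathOrd (Restrict (H i) (s i)) ≤ β i)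
    (hβT : ∀ i j, T i j → 0 < pathOrd (Restrict (H i) (s i)) →
      pathOrd (Restrict (H i) (s i)) + β j ≤ β i) :
    ∀ (P : List (Σ i, V i)) (i : Fin t) (m : List (V i)), m ≠ [] →
      (m.map (Sigma.mk i) ++ P).Nodup → (m.map (Sigma.mk i) ++ P).IsChain (Comp T V H) →
      (∀ x ∈ m.map (Sigma.mk i) ++ P, x.2 ∈ s x.1) → m.length + P.length ≤ β i := by
  intro P
  induction P with
  | nil =>
    intro i m hm hn hc hs
    have hm₁ := length_le_pathOrd_restrict_of_append hTl hn hc hs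
    have hm₀ := length_pos_of_ne_nil hm
    simpa using hm₁.trans (hβ i (by omega))
  | cons y P ih =>
    intro i m hm hn hc hs
    have hm₁ := length_le_pathOrd_restrict_of_append hTl hn hc hs
    have hm₀ := length_pos_of_ne_nil hm
    obtain ⟨j, v⟩ := y
    by_cases hji : j = i
    · subst hji
      have hP := ih j (m ++ [v]) (by simp) (by simpa using hn) (by simpa using hc)
        (by simpa using hs)
      simp only [length_append, length_cons] at hP ⊢
      omega
    · have hT : T i j := by
        obtain ⟨u, hu⟩ := Option.isSome_iff_exists.1 (getLast?_isSome.2 hm)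
        refine ((isChain_append.1 hc).2.2 ⟨i, u⟩ (by simp [hu]) ⟨j, v⟩ rfl).resolve_right ?_
        exact fun ⟨h, _⟩ => hji h.symm
      have hP := ih j [v] (cons_ne_nil _ _) hn.of_append_right hc.right_of_append
        fun x hx => hs x (mem_append_right _ hx)
      have hij := hβT i j hT (by omega)
      simp only [length_cons] at hP ⊢
      omega

theorem pathOrd_restrict_le (hTl : Loopless T) {s : ∀ i, Set (V i)} {β : Fin t → ℕ} {b : ℕ}
    (hβ : ∀ i, 0 < pathOrd (Restrict (H i) (s i)) → pathOrd (Restrict (H i) (s i)) ≤ β i)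
    (hβT : ∀ i j, T i j → 0 < pathOrd (Restrict (H i) (s i)) →
      pathOrd (Restrict (H i) (s i)) + β j ≤ β i)
    (hb : ∀ i, β i ≤ b) :
    pathOrd (Restrict (Comp T V H) {x | x.2 ∈ s x.1}) ≤ b := by
  refine _root_.pathOrd_restrict_le fun l hn hc hs => ?_
  rcases l with _ | ⟨⟨i, v⟩, P⟩
  · exact Nat.zero_le b
  · have := length_add_length_le hTl hβ hβT P i [v] (cons_ne_nil _ _) hn hc hs
    simp only [length_cons] at this ⊢
    exact (by omega : P.length + 1 ≤ β i).trans (hb i)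

end Comp

theorem stmt14_general {t : ℕ} (V : Fin t → Type u) [∀ i, Fintype (V i)]
    [∀ i, Nonempty (V i)] (T : Fin t → Fin t → Prop) (H : ∀ i, V i → V i → Prop)
    (hTl : Loopless T)
    (hacyc : ∀ x : Fin t, ¬ Relation.TransGen T x x)
    (q : ℕ)
    (hpart : ∀ (i : Fin t) (qi : ℕ), 0 < qi → qi < pathOrd (H i) →
      ∃ s : Set (V i), pathOrd (Restrict (H i) s) ≤ qi ∧
        pathOrd (Restrict (H i) sᶜ) ≤ pathOrd (H i) - qi) :
    ∃ s : Set (Σ i, V i), pathOrd (Restrict (Comp T V H) s) ≤ q ∧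
      pathOrd (Restrict (Comp T V H) sᶜ) ≤ pathOrd (Comp T V H) - q := by
  obtain ⟨lam, hw, hT, hQ⟩ := Comp.exists_potential (H := H) hacyc
  choose s hsA hsB using fun i => HasPathPartition.exists_le_le (hpart i)
    (x := q - (lam i - pathOrd (H i))) (y := lam i - q) (by have := hw i; omega)
  have hA i : pathOrd (Restrict (H i) (s i)) ≤ pathOrd (H i) := pathOrd_restrict_le_pathOrd _
  have hB i : pathOrd (Restrict (H i) (s i)ᶜ) ≤ pathOrd (H i) := pathOrd_restrict_le_pathOrd _
  refine ⟨{x | x.2 ∈ s x.1}, ?_, ?_⟩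
  · refine Comp.pathOrd_restrict_le hTl (β := fun i => min q (lam i)) ?_ ?_
      fun _ => min_le_left _ _
    · intro i _
      have := hsA i; have := hA i; have := hw i
      omega
    · intro i j hij _
      have := hsA i; have := hA i; have := hT i j hij
      omega
  · refine Comp.pathOrd_restrict_le (s := fun i => (s i)ᶜ) hTl (β := fun i => lam i - q)
      (fun i _ => hsB i) ?_ fun i => Nat.sub_le_sub_right (hQ i) q
    intro i j hij _
    have := hsB i; have := hB i; have := hT i j hij
    omega

/-- the Path Partition property for compositions `T[H₁,…,H_t]` with `T`
acyclic, provided each `H_i` satisfies the corresponding partition property. -/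
theorem stmt14 {t : ℕ} (ht : 2 ≤ t) (V : Fin t → Type u) [∀ i, Fintype (V i)]
    [∀ i, Nonempty (V i)] (T : Fin t → Fin t → Prop) (H : ∀ i, V i → V i → Prop)
    (hTl : Loopless T) (hHl : ∀ i, Loopless (H i))
    (hacyc : ∀ x : Fin t, ¬ Relation.TransGen T x x)
    (q : ℕ) (hq : 0 < q) (hql : q < pathOrd (Comp T V H))
    (hpart : ∀ (i : Fin t) (qi : ℕ), 0 < qi → qi < pathOrd (H i) →
      ∃ s : Set (V i), pathOrd (Restrict (H i) s) ≤ qi ∧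
        pathOrd (Restrict (H i) sᶜ) ≤ pathOrd (H i) - qi) :
    ∃ s : Set (Σ i, V i), pathOrd (Restrict (Comp T V H) s) ≤ q ∧
      pathOrd (Restrict (Comp T V H) sᶜ) ≤ pathOrd (Comp T V H) - q :=
  stmt14_general V T H hTl hacyc q hpart
end

section
/- Let Q = T[H_1, …, H_t] with t ≥ 2, where T is a strong digraph and H_1, …, H_t are arbitrary digraphs each having at least two vertices. Then for every vertex r of Q, the digraph Q has an out-branching rooted at r and an in-branching rooted at r which are arc-disjoint. -/
universe u v

/-- `B` is an out-branching of the digraph `A` rooted at `r`. -/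
def IsOutBranching {V : Type u} (A B : V → V → Prop) (r : V) : Prop :=
  (∀ x y, B x y → A x y) ∧ (∀ v, v ≠ r → ∃! u, B u v) ∧ (∀ u, ¬ B u r) ∧
    ∀ v, Relation.ReflTransGen B r v

/-- `B` is an in-branching of the digraph `A` rooted at `r`. -/
def IsInBranching {V : Type u} (A B : V → V → Prop) (r : V) : Prop :=
  (∀ x y, B x y → A x y) ∧ (∀ v, v ≠ r → ∃! u, B v u) ∧ (∀ u, ¬ B r u) ∧
    ∀ v, Relation.ReflTransGen B v r

/-!
Let `r = (i₀, v₀)` and choose distinct vertices `a i ≠ b i` in every class, with `a i₀ = v₀`.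
The strong digraph `T` has an out-branching and an in-branching rooted at `i₀`, given by a parent
function `π` and a successor function `σ`, extended at `i₀` by an in-neighbour `π i₀` and an
out-neighbour `σ i₀`. Only arcs of `Q` between classes are used.

The out-branching copies the out-tree `π` twice: on the vertices `(i, a i)` from `r`, and on the
vertices `(i, b i)` from `(i₀, b i₀)`; every other vertex of class `i` (including `(i₀, b i₀)`)
hangs from `(π i, a (π i))`. The in-branching sends each vertex of class `i` into class `σ i`:
to `a (σ i)` if it is a `b`-vertex or `σ i = i₀`, and to `b (σ i)` otherwise. On a common arc
`x → y` the head `y` is outside class `i₀`, so the out-branching makes `x` a `b`-vertex iff `y`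
is one, while the in-branching makes `y` a `b`-vertex iff `x` is not.
-/

open Function Relation

section Branching

variable {V : Type u} {A : V → V → Prop}

theorem ReachIn.tail {n : ℕ} {x y z : V} (h : ReachIn A n x y) (hyz : A y z) :
    ReachIn A (n + 1) x z := by
  induction n generalizing x with
  | zero => exact .inr ⟨z, (h : x = y) ▸ hyz, rfl⟩
  | succ n ih =>
    rcases h with rfl | ⟨w, hxw, hw⟩
    · exact .inr ⟨z, hyz, .inl rfl⟩
    · exact .inr ⟨w, hxw, ih hw⟩

theorem Relation.ReflTransGen.exists_reachIn {x y : V} (h : ReflTransGen A x y) :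
    ∃ n, ReachIn A n x y := by
  induction h with
  | refl => exact ⟨0, rfl⟩
  | tail _ hyz ih =>
    obtain ⟨n, hn⟩ := ih
    exact ⟨n + 1, hn.tail hyz⟩

/-- An in-branching rooted at `r` encoded by a successor function (its `swap` is the
out-branching with parent function `s`); the value `s r` is ignored. -/
def succRel (s : V → V) (r : V) : V → V → Prop := fun x y => x ≠ r ∧ y = s x

variable {s : V → V} {r : V}

theorem reflTransGen_succRel_of_rank (d : V → ℕ) (hd : ∀ x, x ≠ r → d (s x) < d x) (x : V) :
    ReflTransGen (succRel s r) x r := by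
  induction x using (InvImage.wf d wellFounded_lt).induction with
  | _ x ih =>
    by_cases hxr : x = r
    · exact hxr ▸ .refl
    · exact .head ⟨hxr, rfl⟩ (ih _ (hd x hxr))

theorem isInBranching_succRel (hA : ∀ x, x ≠ r → A x (s x))
    (hs : ∀ x, ReflTransGen (succRel s r) x r) : IsInBranching A (succRel s r) r :=
  ⟨fun x _ ⟨hx, hy⟩ => hy ▸ hA x hx, fun x hx => ⟨s x, ⟨hx, rfl⟩, fun _ h => h.2⟩,
    fun _ h => h.1 rfl, hs⟩

theorem isOutBranching_swap_succRel (hA : ∀ x, x ≠ r → A (s x) x)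
    (hs : ∀ x, ReflTransGen (succRel s r) x r) : IsOutBranching A (swap (succRel s r)) r :=
  ⟨fun _ y ⟨hy, hx⟩ => hx ▸ hA y hy, fun y hy => ⟨s y, ⟨hy, rfl⟩, fun _ h => h.2⟩,
    fun _ h => h.1 rfl, fun y => (hs y).swap⟩

theorem IsStrong.exists_succRel [Nontrivial V] (hA : IsStrong A) (r : V) :
    ∃ s : V → V, (∀ x, A x (s x)) ∧ ∀ x, ReflTransGen (succRel s r) x r := by
  classical
  have hd : ∀ x, ∃ n, ReachIn A n x r := fun x => (hA x r).exists_reachIn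
  have step : ∀ x, ∃ y, A x y ∧ (x ≠ r → Nat.find (hd y) < Nat.find (hd x)) := by
    intro x
    by_cases hxr : x = r
    · obtain ⟨y, hyx⟩ := exists_ne x
      obtain ⟨z, hxz, -⟩ := (hA x y).cases_head.resolve_left hyx.symm
      exact ⟨z, hxz, absurd hxr⟩
    · have hx := Nat.find_spec (hd x)
      obtain ⟨n, hn⟩ : ∃ n, Nat.find (hd x) = n + 1 :=
        Nat.exists_eq_succ_of_ne_zero fun h0 => hxr (by rwa [h0] at hx)
      rw [hn] at hx
      obtain ⟨y, hxy, hy⟩ := hx.resolve_left hxr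
      exact ⟨y, hxy, fun _ => hn ▸ Nat.lt_succ_of_le (Nat.find_min' (hd y) hy)⟩
  -- `s x` is the next vertex of a shortest walk from `x` to `r`
  choose s hs using step
  exact ⟨s, fun x => (hs x).1,
    reflTransGen_succRel_of_rank (fun x => Nat.find (hd x)) fun x hx => (hs x).2 hx⟩

theorem IsStrong.swap (hA : IsStrong A) : IsStrong (swap A) := fun x y => (hA y x).swap

end Branching

theorem exists_sections_ne {ι : Type*} {V : ι → Type u} [∀ i, Nontrivial (V i)]
    (i₀ : ι) (v₀ : V i₀) : ∃ a b : ∀ i, V i, (∀ i, a i ≠ b i) ∧ a i₀ = v₀ := by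
  classical
  let a := Function.update (fun i => Classical.arbitrary (V i)) i₀ v₀
  choose b hb using fun i => exists_ne (a i)
  exact ⟨a, b, fun i => (hb i).symm, Function.update_self ..⟩

section Composition

variable {t : ℕ} {V : Fin t → Type u} (a b : ∀ i, V i)

open Classical in
noncomputable def classRep (c : Prop) (i : Fin t) : Σ i, V i := ⟨i, if c then b i else a i⟩

def IsBVertex (x : Σ i, V i) : Prop := x.2 = b x.1

noncomputable def compParent (π : Fin t → Fin t) (i₀ : Fin t) (y : Σ i, V i) : Σ i, V i :=
  classRep a b (y.1 ≠ i₀ ∧ IsBVertex b y) (π y.1)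

noncomputable def compSucc (σ : Fin t → Fin t) (i₀ : Fin t) (x : Σ i, V i) : Σ i, V i :=
  classRep a b (σ x.1 ≠ i₀ ∧ ¬ IsBVertex b x) (σ x.1)

variable {a b} (hab : ∀ i, a i ≠ b i)
include hab

theorem isBVertex_classRep (c : Prop) (i : Fin t) : IsBVertex b (classRep a b c i) ↔ c := by
  by_cases hc : c <;> simp [IsBVertex, classRep, hc, hab i]

variable {π σ : Fin t → Fin t} {i₀ : Fin t}

theorem compParent_classRep {p : Fin t} (hp : p ≠ i₀) (c : Prop) :
    compParent a b π i₀ (classRep a b c p) = classRep a b c (π p) := by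
  change classRep a b (p ≠ i₀ ∧ IsBVertex b (classRep a b c p)) (π p) = _
  rw [isBVertex_classRep hab]
  simp [hp]

theorem reflTransGen_compParent (hπ : ∀ p, ReflTransGen (succRel π i₀) p i₀) (y : Σ i, V i) :
    ReflTransGen (succRel (compParent a b π i₀) ⟨i₀, a i₀⟩) y ⟨i₀, a i₀⟩ := by
  set R := succRel (compParent a b π i₀) ⟨i₀, a i₀⟩
  have lift (c : Prop) (p : Fin t) : ReflTransGen R (classRep a b c p) (classRep a b c i₀) :=
    ReflTransGen.lift (classRep a b c) (fun x _ ⟨hx, hy⟩ =>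
      ⟨fun h => hx (congrArg Sigma.fst h), hy ▸ (compParent_classRep hab hx c).symm⟩) _ _ (hπ p)
  have reach_a (p : Fin t) : ReflTransGen R ⟨p, a p⟩ ⟨i₀, a i₀⟩ := by
    simpa [classRep] using lift False p
  have reach_b (p : Fin t) : ReflTransGen R ⟨p, b p⟩ ⟨i₀, a i₀⟩ := by
    have hne : classRep a b True i₀ ≠ ⟨i₀, a i₀⟩ := by simpa [classRep] using (hab i₀).symm
    have hstep : compParent a b π i₀ (classRep a b True i₀) = ⟨π i₀, a (π i₀)⟩ := by
      simp [compParent, classRep]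
    simpa [classRep] using (lift True p).trans (.head ⟨hne, rfl⟩ (hstep ▸ reach_a (π i₀)))
  by_cases hy : y = ⟨i₀, a i₀⟩
  · exact hy ▸ .refl
  · refine .head ⟨hy, rfl⟩ ?_
    unfold compParent classRep
    split_ifs
    exacts [reach_b _, reach_a _]

omit hab in
theorem reflTransGen_compSucc (hσ : ∀ p, ReflTransGen (succRel σ i₀) p i₀) (x : Σ i, V i) :
    ReflTransGen (succRel (compSucc a b σ i₀) ⟨i₀, a i₀⟩) x ⟨i₀, a i₀⟩ := by
  set R := succRel (compSucc a b σ i₀) ⟨i₀, a i₀⟩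
  have key (p : Fin t) : ∀ c : Prop, ReflTransGen R (classRep a b (p ≠ i₀ ∧ c) p) ⟨i₀, a i₀⟩ := by
    induction hσ p using ReflTransGen.head_induction_on with
    | refl =>
      intro c
      simp only [classRep, ne_eq, not_true_eq_false, false_and, if_false]
      exact .refl
    | head hstep _ ih =>
      obtain ⟨hp, rfl⟩ := hstep
      exact fun c => .head ⟨fun h => hp (congrArg Sigma.fst h), rfl⟩ (ih _)
  by_cases hx : x = ⟨i₀, a i₀⟩
  · exact hx ▸ .refl
  · exact .head ⟨hx, rfl⟩ (key _ _)

theorem compParent_compSucc_disjoint (x y : Σ i, V i)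
    (h : swap (succRel (compParent a b π i₀) ⟨i₀, a i₀⟩) x y) :
    ¬ succRel (compSucc a b σ i₀) ⟨i₀, a i₀⟩ x y := by
  rintro ⟨-, rfl⟩
  obtain ⟨hy, hx⟩ := h
  have hσx : σ x.1 ≠ i₀ := by
    intro h
    apply hy
    change classRep a b (σ x.1 ≠ i₀ ∧ _) (σ x.1) = _
    generalize σ x.1 = p at h ⊢
    subst h
    simp [classRep]
  have hBx : IsBVertex b x ↔ σ x.1 ≠ i₀ ∧ IsBVertex b (compSucc a b σ i₀ x) := by
    conv_lhs => rw [hx]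
    exact isBVertex_classRep hab _ _
  have hBy : IsBVertex b (compSucc a b σ i₀ x) ↔ σ x.1 ≠ i₀ ∧ ¬ IsBVertex b x :=
    isBVertex_classRep hab _ _
  tauto

end Composition

theorem exists_arcDisjoint_branchings_comp {t : ℕ} [Nontrivial (Fin t)] {V : Fin t → Type u}
    [∀ i, Nontrivial (V i)] (T : Fin t → Fin t → Prop) (H : ∀ i, V i → V i → Prop)
    (hT : IsStrong T) (r : Σ i, V i) :
    ∃ B₁ B₂ : (Σ i, V i) → (Σ i, V i) → Prop,
      IsOutBranching (Comp T V H) B₁ r ∧ IsInBranching (Comp T V H) B₂ r ∧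
      ∀ x y, B₁ x y → ¬ B₂ x y := by
  obtain ⟨i₀, v₀⟩ := r
  obtain ⟨a, b, hab, rfl⟩ := exists_sections_ne i₀ v₀
  obtain ⟨π, hTπ, hπ⟩ := hT.swap.exists_succRel i₀
  obtain ⟨σ, hTσ, hσ⟩ := hT.exists_succRel i₀
  exact ⟨_, _,
    isOutBranching_swap_succRel (fun y _ => .inl (hTπ y.1)) (reflTransGen_compParent hab hπ),
    isInBranching_succRel (fun x _ => .inl (hTσ x.1)) (reflTransGen_compSucc hσ),
    compParent_compSucc_disjoint hab⟩

theorem stmt18_general {t : ℕ} (ht : 2 ≤ t) (V : Fin t → Type u) [∀ i, Fintype (V i)]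
    (T : Fin t → Fin t → Prop) (H : ∀ i, V i → V i → Prop)
    (hTstrong : IsStrong T) (hsize : ∀ i, 2 ≤ Fintype.card (V i)) :
    ∀ r : Σ i, V i, ∃ B₁ B₂ : (Σ i, V i) → (Σ i, V i) → Prop,
      IsOutBranching (Comp T V H) B₁ r ∧ IsInBranching (Comp T V H) B₂ r ∧
      ∀ x y, B₁ x y → ¬ B₂ x y := by
  have : Nontrivial (Fin t) := Fin.nontrivial_iff_two_le.mpr ht
  have : ∀ i, Nontrivial (V i) := fun i => Fintype.one_lt_card_iff_nontrivial.mp (hsize i)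
  exact exists_arcDisjoint_branchings_comp T H hTstrong

/-- If `T` is strong and each `H_i` has at least two vertices, then
`Q = T[H₁,…,H_t]` has arc-disjoint out- and in-branchings rooted at every vertex. -/
theorem stmt18 {t : ℕ} (ht : 2 ≤ t) (V : Fin t → Type u) [∀ i, Fintype (V i)]
    [∀ i, Nonempty (V i)] (T : Fin t → Fin t → Prop) (H : ∀ i, V i → V i → Prop)
    (hTl : Loopless T) (hHl : ∀ i, Loopless (H i))
    (hTstrong : IsStrong T) (hsize : ∀ i, 2 ≤ Fintype.card (V i)) :
    ∀ r : Σ i, V i, ∃ B₁ B₂ : (Σ i, V i) → (Σ i, V i) → Prop,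
      IsOutBranching (Comp T V H) B₁ r ∧ IsInBranching (Comp T V H) B₂ r ∧
      ∀ x y, B₁ x y → ¬ B₂ x y :=
  stmt18_general ht V T H hTstrong hsize
end
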